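/- arXiv:1509.07574 — 11 statements merged into one kernel-verified Lean document; each statement's English description precedes it below -/
import Mathlib

section
/- Let R be a countable integral domain. Then R is a field if and only if there exists a finitely additive affinely invariant mean on R, that is, a function λ from the power set of R to the interval [0,1] such that λ(R) = 1, λ(E_1 ∪ E_2) = λ(E_1) + λ(E_2) whenever E_1, E_2 ⊆ R are disjoint, and λ({x ∈ R : u·x + v ∈ E}) = λ(E) for every E ⊆ R and all u, v ∈ R with u ≠ 0. -/
/-!
A countable commutative monoid `M` carries an invariant mean. Enumerate `M` as `e₀, e₁, …` and
average over the boxes `{∏_{i<k} e_i ^ a_i : a_i < k}`: multiplying by `e_j` (`j < k`) only moves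
the slice `a_j = k - 1`, a `1/k` fraction of the box, so an ultralimit of these averages is
invariant. For a countable field `K`, the affine group is an extension of `Kˣ` by `(K, +)`, so
averaging the mean of `(K, +)`, dilated by `u`, against the mean of `Kˣ` gives an affinely
invariant mean on `K`. Conversely, if `a ≠ 0` is not a unit, `aR` and `aR - 1` are disjoint and
both have mean one.
-/

open Finset Filter Topology
open scoped BigOperators

lemma Fintype.expect_comp_eval {ι κ : Type*} [Fintype ι] [DecidableEq ι] [Fintype κ]
    (g : κ → ℝ) (j : ι) : 𝔼 a : ι → κ, g (a j) = 𝔼 t, g t := by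
  rcases isEmpty_or_nonempty κ with hκ | hκ
  · have : IsEmpty (ι → κ) := ⟨fun a => hκ.false (a j)⟩
    simp
  obtain ⟨m, hm⟩ := Nat.exists_eq_add_of_lt (Fintype.card_pos_iff.2 ⟨j⟩)
  have : (Fintype.card κ : ℝ) ≠ 0 := by exact_mod_cast Fintype.card_ne_zero
  rw [Fintype.expect_eq_sum_div_card, Fintype.expect_eq_sum_div_card, ← Fintype.piFinset_univ,
    Fintype.sum_piFinset_apply, nsmul_eq_mul, Fintype.card_pi, prod_const, card_univ, card_univ,
    hm, zero_add, Nat.add_sub_cancel, Nat.cast_pow, Nat.cast_pow, pow_succ]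
  field_simp

lemma IsCompact.exists_tendsto_ultrafilter {X ι : Type*} [TopologicalSpace X] {K : Set X}
    (hK : IsCompact K) (U : Ultrafilter ι) {s : ι → X} (hs : ∀ i, s i ∈ K) :
    ∃ x ∈ K, Tendsto s U (𝓝 x) :=
  hK.ultrafilter_le_nhds' (U.map s) (Ultrafilter.mem_map.2 (univ_mem' hs))

lemma exists_forall_abs_le_of_mem_Icc {α : Type*} {f : α → ℝ} {a b : ℝ}
    (hf : ∀ x, f x ∈ Set.Icc a b) : ∃ C, ∀ x, |f x| ≤ C :=
  ⟨max |a| |b|, fun x => abs_le_max_abs_abs (hf x).1 (hf x).2⟩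

lemma Set.indicator_one_mem_Icc {α : Type*} (E : Set α) (x : α) :
    E.indicator (1 : α → ℝ) x ∈ Set.Icc 0 1 := by
  by_cases hx : x ∈ E <;> simp [hx]

section Folner

variable {M : Type*} [CommMonoid M]

lemma prod_pow_update_succ {ι : Type*} [Fintype ι] [DecidableEq ι] (e : ι → M) (a : ι → ℕ)
    (j : ι) : ∏ i, e i ^ Function.update a j (a j + 1) i = e j * ∏ i, e i ^ a i := by
  have h : ∀ i, e i ^ Function.update a j (a j + 1) i
      = Function.update (fun i => e i ^ a i) j (e j ^ (a j + 1)) i :=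
    Function.apply_update (fun i t => e i ^ t) a j _
  rw [Fintype.prod_congr _ _ h, prod_update_of_mem (mem_univ j),
    prod_eq_mul_prod_sdiff_singleton j _ fun h => (h (mem_univ j)).elim, pow_succ', mul_assoc]

def rotateCoord {n : ℕ} (j : Fin (n + 1)) : Equiv.Perm (Fin (n + 1) → Fin (n + 1)) :=
  Equiv.piCongrRight (Pi.mulSingle j (finRotate (n + 1)))

lemma prod_pow_rotateCoord {n : ℕ} (e : Fin (n + 1) → M) {j : Fin (n + 1)}
    (a : Fin (n + 1) → Fin (n + 1)) (ha : a j ≠ Fin.last n) :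
    ∏ i, e i ^ (rotateCoord j a i : ℕ) = e j * ∏ i, e i ^ (a i : ℕ) := by
  have : (fun i => (rotateCoord j a i : ℕ)) = Function.update (fun i => (a i : ℕ)) j (a j + 1) := by
    ext i
    by_cases h : i = j
    · subst h
      simpa [rotateCoord] using coe_finRotate_of_ne_last ha
    · simp [rotateCoord, h]
  exact (congrArg (fun b : Fin (n + 1) → ℕ => ∏ i, e i ^ b i) this).trans
    (prod_pow_update_succ e _ j)

noncomputable def boxAverage (e : ℕ → M) (k : ℕ) (f : M → ℝ) : ℝ :=
  𝔼 a : Fin k → Fin k, f (∏ i : Fin k, e i ^ (a i : ℕ))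

lemma boxAverage_mem_Icc (e : ℕ → M) (k : ℕ) {f : M → ℝ} {a b : ℝ}
    (hf : ∀ x, f x ∈ Set.Icc a b) : boxAverage e k f ∈ Set.Icc a b :=
  have hne : (univ : Finset (Fin k → Fin k)).Nonempty := ⟨id, mem_univ _⟩
  ⟨le_expect hne fun _ _ => (hf _).1, expect_le hne fun _ _ => (hf _).2⟩

lemma boxAverage_add (e : ℕ → M) (k : ℕ) (f g : M → ℝ) :
    boxAverage e k (f + g) = boxAverage e k f + boxAverage e k g :=
  expect_add_distrib _ _ _

lemma abs_boxAverage_mul_left_sub_le (e : ℕ → M) {f : M → ℝ} {C : ℝ} (hf : ∀ x, |f x| ≤ C)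
    {j k : ℕ} (hjk : j < k) :
    |boxAverage e k (fun x => f (e j * x)) - boxAverage e k f| ≤ 2 * C / k := by
  obtain ⟨n, rfl⟩ : ∃ n, k = n + 1 := Nat.exists_eq_add_one.2 (by omega)
  set j' : Fin (n + 1) := ⟨j, hjk⟩
  set w : (Fin (n + 1) → Fin (n + 1)) → M := fun a => ∏ i : Fin (n + 1), e i ^ (a i : ℕ)
  set σ := rotateCoord j'
  have hσ : ∀ a, a j' ≠ Fin.last n → w (σ a) = e j * w a := fun a ha =>
    prod_pow_rotateCoord (fun i : Fin (n + 1) => e i) a ha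
  have hterm : ∀ a, |f (e j * w a) - f (w (σ a))| ≤ if a j' = Fin.last n then 2 * C else 0 := by
    intro a
    split_ifs with ha
    · linarith [abs_sub (f (e j * w a)) (f (w (σ a))), hf (e j * w a), hf (w (σ a))]
    · rw [hσ a ha, sub_self, abs_zero]
  calc |boxAverage e (n + 1) (fun x => f (e j * x)) - boxAverage e (n + 1) f|
      = |𝔼 a, (f (e j * w a) - f (w (σ a)))| := by
        rw [expect_sub_distrib, Fintype.expect_equiv σ (fun a => f (w (σ a))) (fun a => f (w a))
          fun _ => rfl]
        rfl
    _ ≤ 𝔼 a, |f (e j * w a) - f (w (σ a))| := abs_expect_le _ _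
    _ ≤ 𝔼 a : Fin (n + 1) → Fin (n + 1), if a j' = Fin.last n then 2 * C else 0 :=
        expect_le_expect fun a _ => hterm a
    _ = 2 * C / (n + 1 : ℕ) := by
        rw [Fintype.expect_comp_eval (fun t => if t = Fin.last n then 2 * C else 0),
          Fintype.expect_ite_eq', Fintype.card_fin, NNRat.smul_def]
        simp [div_eq_inv_mul]

lemma tendsto_boxAverage_mul_left_sub (e : ℕ → M) {f : M → ℝ} (hf : ∃ C, ∀ x, |f x| ≤ C)
    (j : ℕ) :
    Tendsto (fun k => boxAverage e k (fun x => f (e j * x)) - boxAverage e k f) atTop (𝓝 0) := by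
  obtain ⟨C, hC⟩ := hf
  refine squeeze_zero_norm' ?_ (tendsto_const_div_atTop_nhds_zero_nat (2 * C))
  filter_upwards [eventually_gt_atTop j] with k hk
  exact abs_boxAverage_mul_left_sub_le e hC hk

end Folner

-- A left-invariant mean on the bounded functions; `mem_Icc` encodes positivity and normalisation.
structure InvariantMean (M : Type*) [Mul M] where
  toFun : (M → ℝ) → ℝ
  mem_Icc : ∀ (f : M → ℝ) (a b : ℝ), (∀ x, f x ∈ Set.Icc a b) → toFun f ∈ Set.Icc a b
  map_add : ∀ f g : M → ℝ, (∃ C, ∀ x, |f x| ≤ C) → (∃ C, ∀ x, |g x| ≤ C) →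
    toFun (f + g) = toFun f + toFun g
  map_comp_mul_left : ∀ (f : M → ℝ) (y : M), (∃ C, ∀ x, |f x| ≤ C) →
    toFun (fun x => f (y * x)) = toFun f

namespace InvariantMean

instance {M : Type*} [Mul M] : CoeFun (InvariantMean M) fun _ => (M → ℝ) → ℝ := ⟨toFun⟩

lemma map_const {M : Type*} [Mul M] (m : InvariantMean M) (c : ℝ) : m (fun _ => c) = c := by
  simpa using m.mem_Icc (fun _ => c) c c fun _ => Set.left_mem_Icc.2 le_rfl

theorem nonempty_of_countable (M : Type*) [CommMonoid M] [Countable M] :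
    Nonempty (InvariantMean M) := by
  obtain ⟨e, he⟩ := exists_surjective_nat M
  obtain ⟨U, hU⟩ := Ultrafilter.exists_le (atTop : Filter ℕ)
  set m : (M → ℝ) → ℝ := fun f => limUnder (U : Filter ℕ) fun k => boxAverage e k f
  have hIcc : ∀ (f : M → ℝ) (a b : ℝ), (∀ x, f x ∈ Set.Icc a b) →
      m f ∈ Set.Icc a b ∧ Tendsto (fun k => boxAverage e k f) U (𝓝 (m f)) := by
    intro f a b hf
    obtain ⟨L, hL, hlim⟩ :=
      isCompact_Icc.exists_tendsto_ultrafilter U fun k => boxAverage_mem_Icc e k hf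
    rw [show m f = L from hlim.limUnder_eq]
    exact ⟨hL, hlim⟩
  have htendsto : ∀ f : M → ℝ, (∃ C, ∀ x, |f x| ≤ C) →
      Tendsto (fun k => boxAverage e k f) U (𝓝 (m f)) :=
    fun f ⟨C, hC⟩ => (hIcc f (-C) C fun x => abs_le.1 (hC x)).2
  refine ⟨⟨m, fun f a b hf => (hIcc f a b hf).1, fun f g hf hg => ?_, fun f y hf => ?_⟩⟩
  · have := (htendsto f hf).add (htendsto g hg)
    simp_rw [← boxAverage_add] at this
    exact this.limUnder_eq
  · obtain ⟨j, rfl⟩ := he y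
    have := ((tendsto_boxAverage_mul_left_sub e hf j).mono_left hU).add (htendsto f hf)
    simp_rw [sub_add_cancel, zero_add] at this
    exact this.limUnder_eq

end InvariantMean

structure IsAffineInvariantMean {R : Type*} [Semiring R] (lam : Set R → ℝ) : Prop where
  mem_Icc : ∀ E, lam E ∈ Set.Icc 0 1
  map_univ : lam Set.univ = 1
  map_union : ∀ E₁ E₂, Disjoint E₁ E₂ → lam (E₁ ∪ E₂) = lam E₁ + lam E₂
  map_affine_preimage : ∀ (E : Set R) (u v : R), u ≠ 0 → lam {x | u * x + v ∈ E} = lam E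

section Affine

variable {K : Type*} [Field K] (mA : InvariantMean (Multiplicative K))

-- the `mA`-mean of `u⁻¹ • E`
noncomputable def scaledMean (E : Set K) (u : Kˣ) : ℝ :=
  mA fun x => E.indicator 1 (u * x.toAdd)

lemma scaledMean_mem_Icc (E : Set K) (u : Kˣ) : scaledMean mA E u ∈ Set.Icc 0 1 :=
  mA.mem_Icc _ 0 1 fun _ => E.indicator_one_mem_Icc _

lemma scaledMean_univ (u : Kˣ) : scaledMean mA Set.univ u = 1 := by
  simpa [scaledMean] using mA.map_const 1

lemma scaledMean_union {E₁ E₂ : Set K} (hE : Disjoint E₁ E₂) (u : Kˣ) :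
    scaledMean mA (E₁ ∪ E₂) u = scaledMean mA E₁ u + scaledMean mA E₂ u := by
  have h := mA.map_add (fun x => E₁.indicator 1 (u * x.toAdd))
    (fun x => E₂.indicator 1 (u * x.toAdd))
    (exists_forall_abs_le_of_mem_Icc fun _ => E₁.indicator_one_mem_Icc _)
    (exists_forall_abs_le_of_mem_Icc fun _ => E₂.indicator_one_mem_Icc _)
  simpa only [scaledMean, Set.indicator_union_of_disjoint hE, Pi.add_def] using h

lemma scaledMean_affine_preimage (E : Set K) {u₀ : K} (hu₀ : u₀ ≠ 0) (v : K) (u : Kˣ) :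
    scaledMean mA {x | u₀ * x + v ∈ E} u = scaledMean mA E (Units.mk0 u₀ hu₀ * u) := by
  set w := Units.mk0 u₀ hu₀ * u
  -- the affine map `x ↦ u₀ u x + v` is `x ↦ w x` after translating by `w⁻¹ v`
  have h : ∀ x : K, u₀ * (u * x) + v = w * ((w⁻¹ : Kˣ) * v + x) := fun x => by
    rw [mul_add, Units.mul_inv_cancel_left, Units.val_mul, Units.val_mk0]
    ring
  have := mA.map_comp_mul_left (fun x => E.indicator 1 (w * x.toAdd))
    (Multiplicative.ofAdd ((w⁻¹ : Kˣ) * v))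
    (exists_forall_abs_le_of_mem_Icc fun _ => E.indicator_one_mem_Icc _)
  simp only [toAdd_mul, toAdd_ofAdd, ← h] at this
  exact this

noncomputable def affineMean (mU : InvariantMean Kˣ) (E : Set K) : ℝ :=
  mU (scaledMean mA E)

theorem isAffineInvariantMean_affineMean (mU : InvariantMean Kˣ) :
    IsAffineInvariantMean (affineMean mA mU) where
  mem_Icc E := mU.mem_Icc _ 0 1 (scaledMean_mem_Icc mA E)
  map_univ := by
    rw [affineMean, funext (scaledMean_univ mA)]
    exact mU.map_const 1
  map_union E₁ E₂ hE := by
    have h := mU.map_add _ _ (exists_forall_abs_le_of_mem_Icc (scaledMean_mem_Icc mA E₁))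
      (exists_forall_abs_le_of_mem_Icc (scaledMean_mem_Icc mA E₂))
    rwa [affineMean, funext (scaledMean_union mA hE)]
  map_affine_preimage E u₀ v hu₀ := by
    rw [affineMean, funext (scaledMean_affine_preimage mA E hu₀ v)]
    exact mU.map_comp_mul_left _ _ (exists_forall_abs_le_of_mem_Icc (scaledMean_mem_Icc mA E))

end Affine

namespace IsAffineInvariantMean

variable {R : Type*} [CommRing R] {lam : Set R → ℝ}

theorem isUnit (h : IsAffineInvariantMean lam) {a : R} (ha : a ≠ 0) : IsUnit a := by
  by_contra hna
  have : Nontrivial R := ⟨⟨a, 0, ha⟩⟩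
  set I := Set.range (a * ·)
  have hI : lam I = 1 := by
    have hpre : {x | a * x + 0 ∈ I} = Set.univ :=
      Set.eq_univ_of_forall fun x => ⟨x, (add_zero _).symm⟩
    rw [← h.map_affine_preimage I a 0 ha, hpre, h.map_univ]
  have hI' : lam {x | 1 * x + 1 ∈ I} = 1 := (h.map_affine_preimage I 1 1 one_ne_zero).trans hI
  have hdisj : Disjoint I {x | 1 * x + 1 ∈ I} := by
    rw [Set.disjoint_left]
    rintro _ ⟨y, rfl⟩ ⟨z, hz⟩
    exact hna (.of_mul_eq_one (z - y) (by simp only [mul_sub, hz]; ring))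
  have := (h.mem_Icc (I ∪ {x | 1 * x + 1 ∈ I})).2
  rw [h.map_union _ _ hdisj, hI, hI'] at this
  norm_num at this

theorem isField [Nontrivial R] (h : IsAffineInvariantMean lam) : IsField R where
  exists_pair_ne := exists_pair_ne R
  mul_comm := mul_comm
  mul_inv_cancel ha := (h.isUnit ha).exists_right_inv

end IsAffineInvariantMean

theorem exists_isAffineInvariantMean (K : Type*) [Field K] [Countable K] :
    ∃ lam : Set K → ℝ, IsAffineInvariantMean lam := by
  have : Countable (Multiplicative K) := inferInstanceAs (Countable K)
  have : Countable Kˣ := Units.val_injective.countable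
  obtain ⟨mA⟩ := InvariantMean.nonempty_of_countable (Multiplicative K)
  obtain ⟨mU⟩ := InvariantMean.nonempty_of_countable Kˣ
  exact ⟨_, isAffineInvariantMean_affineMean mA mU⟩

/-- A countable integral domain `R` is a field iff there is a finitely
additive affinely invariant mean on `R`: a function `λ : 𝒫(R) → [0,1]` with `λ(R) = 1`,
additive on disjoint sets, and invariant under preimages by all affine maps `x ↦ u·x + v`
with `u ≠ 0`. -/
theorem stmt8 (R : Type*) [CommRing R] [IsDomain R] [Countable R] :
    IsField R ↔
      ∃ lam : Set R → ℝ,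
        (∀ E : Set R, 0 ≤ lam E ∧ lam E ≤ 1) ∧
        lam Set.univ = 1 ∧
        (∀ E₁ E₂ : Set R, Disjoint E₁ E₂ → lam (E₁ ∪ E₂) = lam E₁ + lam E₂) ∧
        (∀ (E : Set R) (u v : R), u ≠ 0 → lam {x : R | u * x + v ∈ E} = lam E) := by
  constructor
  · intro hR
    let := hR.toField
    obtain ⟨lam, h⟩ := exists_isAffineInvariantMean R
    exact ⟨lam, h.mem_Icc, h.map_univ, h.map_union, h.map_affine_preimage⟩
  · rintro ⟨lam, hIcc, huniv, hunion, hpre⟩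
    exact IsAffineInvariantMean.isField ⟨hIcc, huniv, hunion, hpre⟩
end

section
/- Let R be an infinite countable integral domain and let p be a multiplicative minimal idempotent of R. Then for every B ∈ p and every r ∈ ℕ there exists a finite set Z ⊆ R of cardinality |Z| = r such that FS(Z) ⊆ B, where FS(Z) denotes the set of all sums ∑_{z ∈ Z'} z over nonempty subsets Z' ⊆ Z. -/
/-!
For `r : ℕ` let `S_r` be the set of ultrafilters each of whose members contains `FS(Z)` for
some `Z` with `|Z| = r`. It is closed, and stable under `q ↦ pure u · q` for `u ≠ 0` because
`v ↦ u v` is an injective additive map. It also meets the minimal invariant set `Y ∋ p`: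
a nonprincipal additive idempotent `q` lies in `S_r` (every `C ∈ q` has an element `e` with
`C - e ∈ q`, which lets one add elements to `Z` one at a time), hence so does `q · p`, and
`q · p ∈ Y` as a limit of the products `pure u · p`. By minimality `Y ⊆ S_r`, so `p ∈ S_r`.
-/

open Filter

/-- The sum of two ultrafilters on an additive structure:
`E ∈ p + q` iff `{u | {v | u + v ∈ E} ∈ q} ∈ p`. -/
def uadd {R : Type*} [Add R] (p q : Ultrafilter R) : Ultrafilter R :=
  p.bind fun u => q.map fun v => u + v

/-- The product of two ultrafilters on a multiplicative structure:
`E ∈ p · q` iff `{u | {v | u · v ∈ E} ∈ q} ∈ p`. -/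
def umul {R : Type*} [Mul R] (p q : Ultrafilter R) : Ultrafilter R :=
  p.bind fun u => q.map fun v => u * v

/-- A set of ultrafilters is additively invariant if it is stable under `q ↦ pure v + q`. -/
def addInvariant {R : Type*} [Add R] (Y : Set (Ultrafilter R)) : Prop :=
  ∀ v : R, ∀ q ∈ Y, uadd (pure v) q ∈ Y

/-- A set of ultrafilters is multiplicatively invariant if it is stable under
`q ↦ pure u · q` for all `u ≠ 0`. -/
def mulInvariant {R : Type*} [Mul R] [Zero R] (Y : Set (Ultrafilter R)) : Prop :=
  ∀ u : R, u ≠ 0 → ∀ q ∈ Y, umul (pure u) q ∈ Y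

/-- The set of additive minimal idempotent ultrafilters: nonprincipal additive idempotents
belonging to some minimal nonempty closed additively invariant set. -/
def AMI (R : Type*) [Add R] : Set (Ultrafilter R) :=
  {p | (∀ u : R, p ≠ pure u) ∧ uadd p p = p ∧
    ∃ Y : Set (Ultrafilter R), p ∈ Y ∧ IsClosed Y ∧ addInvariant Y ∧
      ∀ Z ⊆ Y, Z.Nonempty → IsClosed Z → addInvariant Z → Z = Y}

/-- The set of multiplicative minimal idempotent ultrafilters: nonprincipal multiplicative
idempotents containing `R \ {0}` and belonging to some minimal nonempty closed
multiplicatively invariant set of ultrafilters containing `R \ {0}`. -/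
def MMI (R : Type*) [Mul R] [Zero R] : Set (Ultrafilter R) :=
  {p | (∀ u : R, p ≠ pure u) ∧ {u : R | u ≠ 0} ∈ p ∧ umul p p = p ∧
    ∃ Y : Set (Ultrafilter R), p ∈ Y ∧ IsClosed Y ∧ (∀ q ∈ Y, {u : R | u ≠ 0} ∈ q) ∧
      mulInvariant Y ∧ ∀ Z ⊆ Y, Z.Nonempty → IsClosed Z → mulInvariant Z → Z = Y}

/-- The family 𝒢: ultrafilters in the closure of the additive minimal idempotents that are
also multiplicative minimal idempotents. -/
def dcG (R : Type*) [Add R] [Mul R] [Zero R] : Set (Ultrafilter R) :=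
  closure (AMI R) ∩ MMI R

section Ultrafilters

variable {α : Type*}

theorem isClosed_setOf_forall_mem_imp (P : Set α → Prop) :
    IsClosed {q : Ultrafilter α | ∀ s ∈ q, P s} := by
  simp only [Set.ofPred_forall]
  refine isClosed_iInter fun s => ?_
  by_cases hs : P s
  · simp [hs]
  · simpa [hs, ← Ultrafilter.compl_mem_iff_notMem] using ultrafilter_isClosed_basic sᶜ

theorem isClosed_setOf_le_cofinite :
    IsClosed {q : Ultrafilter α | (q : Filter α) ≤ cofinite} := by
  simp only [Filter.le_def, Set.ofPred_forall]
  exact isClosed_iInter fun s => isClosed_iInter fun _ => ultrafilter_isClosed_basic s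

theorem mem_umul_pure [Mul α] {q : Ultrafilter α} {u : α} {s : Set α} :
    s ∈ umul (pure u) q ↔ {v | u * v ∈ s} ∈ q :=
  Ultrafilter.mem_pure

theorem umul_mem_of_eventually [Mul α] {Y : Set (Ultrafilter α)} (hY : IsClosed Y)
    {p q : Ultrafilter α} (h : ∀ᶠ u in q, umul (pure u) p ∈ Y) : umul q p ∈ Y := by
  rw [← hY.closure_eq, ultrafilterBasis_is_basis.mem_closure_iff]
  rintro o ⟨s, rfl⟩ (hs : {u | {v | u * v ∈ s} ∈ p} ∈ q)
  obtain ⟨u, hu, huY⟩ := Ultrafilter.nonempty_of_mem (inter_mem hs h)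
  exact ⟨umul (pure u) p, mem_umul_pure.mpr hu, huY⟩

end Ultrafilters

section FiniteSums

variable {M N : Type*} [AddCommMonoid M] [AddCommMonoid N]

def HasFS (r : ℕ) (C : Set M) : Prop :=
  ∃ Z : Finset M, Z.card = r ∧ ∀ Z' ⊆ Z, Z'.Nonempty → (∑ z ∈ Z', z) ∈ C

variable (M) in
def hasFSUltrafilters (r : ℕ) : Set (Ultrafilter M) :=
  {q | ∀ C ∈ q, HasFS r C}

theorem HasFS.of_preimage {r : ℕ} {D : Set N} (f : M →+ N) (hf : Function.Injective f)
    (h : HasFS r (f ⁻¹' D)) : HasFS r D := by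
  classical
  obtain ⟨Z, hcard, hZ⟩ := h
  refine ⟨Z.image f, by rw [Finset.card_image_of_injective Z hf, hcard], fun W hW hWne => ?_⟩
  obtain ⟨Z', hZ', rfl⟩ := Finset.subset_image_iff.mp hW
  rw [Finset.sum_image hf.injOn, ← map_sum]
  exact hZ Z' hZ' (Finset.image_nonempty.mp hWne)

theorem HasFS.succ_of_shift {r : ℕ} {C : Set M} {e : M} (he : e ∈ C)
    (h : HasFS r (C ∩ {v | e + v ∈ C} ∩ {e}ᶜ)) : HasFS (r + 1) C := by
  classical
  obtain ⟨Z, hcard, hZ⟩ := h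
  have heZ : e ∉ Z := fun heZ =>
    (hZ {e} (Finset.singleton_subset_iff.mpr heZ) (Finset.singleton_nonempty e)).2 (by simp)
  refine ⟨insert e Z, by rw [Finset.card_insert_of_notMem heZ, hcard], fun W hW hWne => ?_⟩
  by_cases heW : e ∈ W
  · rw [← Finset.add_sum_erase W _ heW]
    rcases (W.erase e).eq_empty_or_nonempty with hempty | hne
    · simpa [hempty] using he
    · exact (hZ _ (Finset.subset_insert_iff.mp hW) hne).1.2
  · exact (hZ W ((Finset.subset_insert_iff_of_notMem heW).mp hW) hWne).1.1

attribute [local instance] Ultrafilter.add Ultrafilter.addSemigroup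

theorem hasFS_of_mem_of_add_self_eq {q : Ultrafilter M} (hq : q + q = q)
    (hcof : (q : Filter M) ≤ cofinite) (r : ℕ) {C : Set M} (hC : C ∈ q) : HasFS r C := by
  induction r generalizing C with
  | zero => exact ⟨∅, rfl, fun Z' hZ' hne => absurd (Finset.subset_empty.mp hZ') hne.ne_empty⟩
  | succ r ih =>
    have hshift : ∀ᶠ u in q, {v | u + v ∈ C} ∈ q := by rwa [← hq] at hC
    obtain ⟨e, heC, he⟩ := Ultrafilter.nonempty_of_mem (inter_mem hC hshift)
    exact HasFS.succ_of_shift heC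
      (ih (inter_mem (inter_mem hC he) (hcof (Set.finite_singleton e).compl_mem_cofinite)))

theorem exists_add_self_eq_le_cofinite (M : Type*) [AddLeftCancelSemigroup M] [Infinite M] :
    ∃ q : Ultrafilter M, q + q = q ∧ (q : Filter M) ≤ cofinite := by
  obtain ⟨q, hq, hqq⟩ := exists_idempotent_in_compact_add_subsemigroup
    Ultrafilter.continuous_add_left {q : Ultrafilter M | (q : Filter M) ≤ cofinite}
    ⟨hyperfilter M, hyperfilter_le_cofinite⟩ isClosed_setOf_le_cofinite.isCompact
    fun p _ q hq s hs => (Ultrafilter.eventually_add p q (· ∈ s)).mpr <|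
      .of_forall fun u => hq ((add_right_injective u).tendsto_cofinite hs)
  exact ⟨q, hqq, hq⟩

end FiniteSums

section Ring

variable {R : Type*} [NonUnitalNonAssocSemiring R] {r : ℕ}

theorem umul_pure_mem_hasFSUltrafilters [IsLeftCancelMulZero R] {u : R} (hu : u ≠ 0)
    {q : Ultrafilter R} (hq : q ∈ hasFSUltrafilters R r) :
    umul (pure u) q ∈ hasFSUltrafilters R r := fun _ hC =>
  (hq _ (mem_umul_pure.mp hC)).of_preimage (AddMonoidHom.mulLeft u) (mul_right_injective₀ hu)

theorem umul_mem_hasFSUltrafilters [IsRightCancelMulZero R] {q y : Ultrafilter R}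
    (hq : q ∈ hasFSUltrafilters R r) (hy : ∀ᶠ v in (y : Filter R), v ≠ 0) :
    umul q y ∈ hasFSUltrafilters R r := by
  intro C (hC : {u | {v | u * v ∈ C} ∈ y} ∈ q)
  obtain ⟨Z, hcard, hZ⟩ := hq _ hC
  have hsums : ∀ᶠ v in (y : Filter R),
      v ≠ 0 ∧ ∀ Z' ∈ Z.powerset, Z'.Nonempty → (∑ z ∈ Z', z) * v ∈ C :=
    hy.and <| (eventually_all_finset _).mpr fun Z' hZ' =>
      eventually_imp_distrib_left.mpr (hZ Z' (Finset.mem_powerset.mp hZ'))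
  obtain ⟨w, hw0, hw⟩ := hsums.exists
  exact HasFS.of_preimage (AddMonoidHom.mulRight w) (mul_left_injective₀ hw0)
    ⟨Z, hcard, fun Z' hZ' => hw Z' (Finset.mem_powerset.mpr hZ')⟩

end Ring

theorem stmt9_general {R : Type*} [CommRing R] [IsDomain R] [Infinite R]
    (p : Ultrafilter R) (hp : p ∈ MMI R) (B : Set R) (hB : B ∈ p) (r : ℕ) :
    ∃ Z : Finset R, Z.card = r ∧ ∀ Z' ⊆ Z, Z'.Nonempty → (∑ z ∈ Z', z) ∈ B := by
  obtain ⟨-, hp0, -, Y, hpY, hYc, -, hYinv, hYmin⟩ := hp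
  obtain ⟨q, hqq, hq⟩ := exists_add_self_eq_le_cofinite R
  have hq0 : ∀ᶠ u in (q : Filter R), u ≠ 0 := hq (Set.finite_singleton 0).compl_mem_cofinite
  have hqp : umul q p ∈ Y ∩ hasFSUltrafilters R r :=
    ⟨umul_mem_of_eventually hYc (hq0.mono fun u hu => hYinv u hu p hpY),
      umul_mem_hasFSUltrafilters (fun C hC => hasFS_of_mem_of_add_self_eq hqq hq r hC) hp0⟩
  have hYFS : Y ∩ hasFSUltrafilters R r = Y :=
    hYmin _ Set.inter_subset_left ⟨_, hqp⟩ (hYc.inter (isClosed_setOf_forall_mem_imp _))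
      fun u hu q' hq' => ⟨hYinv u hu q' hq'.1, umul_pure_mem_hasFSUltrafilters hu hq'.2⟩
  exact Set.inter_eq_left.mp hYFS hpY B hB

/-- Let `R` be an infinite countable integral domain and `p` a multiplicative
minimal idempotent. Every `B ∈ p` contains, for each `r ∈ ℕ`, a set of finite sums `FS(Z)` of
a set `Z` of cardinality `r`. -/
theorem stmt9 {R : Type*} [CommRing R] [IsDomain R] [Countable R] [Infinite R]
    (p : Ultrafilter R) (hp : p ∈ MMI R) (B : Set R) (hB : B ∈ p) (r : ℕ) :
    ∃ Z : Finset R, Z.card = r ∧ ∀ Z' ⊆ Z, Z'.Nonempty → (∑ z ∈ Z', z) ∈ B :=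
  stmt9_general p hp B hB r
end

section
/- Let G be a group, let H be a normal subgroup of G of finite index, and let p be an ultrafilter on G lying in the topological closure (in βG) of the set of idempotent ultrafilters {q ∈ βG : q·q = q}. Then H ∈ p (i.e., the underlying set of H belongs to p). -/
open Filter

/-!
An idempotent ultrafilter pushes forward, along the quotient map onto a finite group, to an
idempotent ultrafilter on that finite group. There every ultrafilter is principal, and the only
idempotent of a group is `1`, so the idempotent contains every finite-index normal subgroup, and
hence every finite-index subgroup, which contains its (finite-index) normal core. Membership of a
fixed set is a clopen condition in `βG`, so it passes to the closure of the idempotents.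
-/

lemma mem_umul {R : Type*} [Mul R] {p q : Ultrafilter R} {s : Set R} :
    s ∈ umul p q ↔ {u | {v | u * v ∈ s} ∈ q} ∈ p := Iff.rfl

lemma map_umul {R S : Type*} [Mul R] [Mul S] (φ : R →ₙ* S) (p q : Ultrafilter R) :
    Ultrafilter.map φ (umul p q) = umul (Ultrafilter.map φ p) (Ultrafilter.map φ q) := by
  ext s
  simp only [Ultrafilter.mem_map, mem_umul, Set.preimage_ofPred_eq, Set.mem_preimage, map_mul]

lemma umul_pure_pure {R : Type*} [Mul R] (x y : R) :
    umul (pure x : Ultrafilter R) (pure y) = pure (x * y) := by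
  ext s
  simp [mem_umul]

lemma eq_pure_one_of_umul_self {M : Type*} [LeftCancelMonoid M] [Finite M]
    {q : Ultrafilter M} (hq : umul q q = q) : q = pure 1 := by
  obtain ⟨x, rfl⟩ := q.eq_pure_of_finite
  rw [umul_pure_pure] at hq
  rw [mul_eq_left.mp (Ultrafilter.pure_injective hq)]

lemma Subgroup.mem_of_umul_self_of_normal {G : Type*} [Group G] (N : Subgroup G) [N.Normal]
    [N.FiniteIndex] {q : Ultrafilter G} (hq : umul q q = q) : (N : Set G) ∈ q := by
  let π : G →ₙ* G ⧸ N := (QuotientGroup.mk' N).toMulHom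
  have hπq : Ultrafilter.map π q = pure 1 :=
    eq_pure_one_of_umul_self (by rw [← map_umul, hq])
  have hker : π ⁻¹' {1} = (N : Set G) := by
    ext g
    simp [π, QuotientGroup.eq_one_iff]
  rw [← hker, ← Ultrafilter.mem_map, hπq]
  exact Ultrafilter.mem_pure.mpr rfl

lemma Subgroup.mem_of_umul_self {G : Type*} [Group G] (H : Subgroup G) [H.FiniteIndex]
    {q : Ultrafilter G} (hq : umul q q = q) : (H : Set G) ∈ q :=
  Filter.mem_of_superset (H.normalCore.mem_of_umul_self_of_normal hq) H.normalCore_le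

theorem stmt10_general {G : Type*} [Group G] (H : Subgroup G) [H.FiniteIndex]
    (p : Ultrafilter G) (hp : p ∈ closure {q : Ultrafilter G | umul q q = q}) :
    (H : Set G) ∈ p :=
  closure_minimal (fun _ hq => H.mem_of_umul_self hq) (ultrafilter_isClosed_basic _) hp

/-- Let `G` be a group, `H` a normal subgroup of finite index, and `p` an
ultrafilter on `G` in the closure of the set of idempotent ultrafilters. Then `H ∈ p`. -/
theorem stmt10 {G : Type*} [Group G] (H : Subgroup G) [H.Normal] [H.FiniteIndex]
    (p : Ultrafilter G) (hp : p ∈ closure {q : Ultrafilter G | umul q q = q}) :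
    (H : Set G) ∈ p :=
  stmt10_general H p hp
end

section
/- Let R be a LID, let p be an ultrafilter on R lying in the topological closure of AMI in βR, and let u ∈ R be nonzero. Then: (i) pure(u)·p lies in the closure of AMI; and (ii) there exists an ultrafilter q in the closure of AMI such that pure(u)·q = p. -/
open Filter

/-- A countable infinite integral domain `R` is a large ideal domain (LID) when, for every
nonzero `x`, the ideal `xR` has finite index as an additive subgroup of `R`. -/
def IsLID (R : Type*) [CommRing R] : Prop :=
  ∀ x : R, x ≠ 0 → (Ideal.span ({x} : Set R)).toAddSubgroup.FiniteIndex


/-! Multiplication by `u ≠ 0` acts on `βR` as `Ultrafilter.map f` for the injective additive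
map `f = (u * ·)`, whose range `uR` has finite index. This map is continuous, and the orbit
closure of `f q` is covered by finitely many translates of the image of the orbit closure of `q`;
hence `f` preserves minimality of orbit closures and maps `AMI` into `AMI`. Conversely an additive
idempotent contains every finite-index subgroup, in particular `uR`, so each element of `AMI` is
the image of an ultrafilter on `R`, which is again in `AMI`. Both inclusions pass to closures,
the second by compactness of `βR`. -/

open Set Function

section UltrafilterArithmetic

lemma uadd_pure_left {S : Type*} [Add S] (v : S) (q : Ultrafilter S) :
    uadd (pure v) q = q.map (v + ·) :=
  rfl

lemma umul_pure_left {S : Type*} [Mul S] (v : S) (q : Ultrafilter S) :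
    umul (pure v) q = q.map (v * ·) :=
  rfl

lemma uadd_pure_uadd_pure {S : Type*} [AddSemigroup S] (v w : S) (q : Ultrafilter S) :
    uadd (pure v) (uadd (pure w) q) = uadd (pure (v + w)) q := by
  simp only [uadd_pure_left, Ultrafilter.map_map, comp_def, add_assoc]

lemma uadd_pure_zero {S : Type*} [AddZeroClass S] (q : Ultrafilter S) :
    uadd (pure (0 : S)) q = q := by
  simp only [uadd_pure_left, zero_add, Ultrafilter.map_id']

lemma map_uadd {S T F : Type*} [Add S] [Add T] [FunLike F S T] [AddHomClass F S T] (f : F)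
    (p q : Ultrafilter S) : (uadd p q).map f = uadd (p.map f) (q.map f) := by
  ext s
  simp only [uadd, Ultrafilter.mem_map]
  show {a | _ ∈ q} ∈ p ↔ {a | _ ∈ q} ∈ p
  simp only [← preimage_comp, comp_def, map_add]

lemma continuous_ultrafilter_map {α β : Type*} (f : α → β) :
    Continuous (Ultrafilter.map f) := by
  refine continuous_generateFrom_iff.mpr ?_
  rintro _ ⟨s, rfl⟩
  exact ultrafilter_isOpen_basic (f ⁻¹' s)

lemma continuous_uadd_pure {S : Type*} [Add S] (v : S) : Continuous (uadd (pure v)) :=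
  continuous_ultrafilter_map (v + ·)

lemma Ultrafilter.map_injective {α β : Type*} {f : α → β} (hf : Injective f) :
    Injective (Ultrafilter.map f) := fun p q h =>
  Ultrafilter.coe_injective <| Filter.map_injective hf <| by
    rw [← Ultrafilter.coe_map, ← Ultrafilter.coe_map, h]

end UltrafilterArithmetic

section OrbitClosure

variable {S : Type*} [AddGroup S]

def orbitClosure (q : Ultrafilter S) : Set (Ultrafilter S) :=
  closure (range fun v : S => uadd (pure v) q)

lemma isClosed_orbitClosure (q : Ultrafilter S) : IsClosed (orbitClosure q) :=
  isClosed_closure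

lemma uadd_pure_mem_orbitClosure (v : S) (q : Ultrafilter S) :
    uadd (pure v) q ∈ orbitClosure q :=
  subset_closure ⟨v, rfl⟩

lemma mem_orbitClosure_self (q : Ultrafilter S) : q ∈ orbitClosure q := by
  simpa only [uadd_pure_zero] using uadd_pure_mem_orbitClosure 0 q

lemma addInvariant_orbitClosure (q : Ultrafilter S) : addInvariant (orbitClosure q) := by
  intro v r hr
  refine map_mem_closure (continuous_uadd_pure v) hr ?_
  rintro _ ⟨w, rfl⟩
  exact ⟨v + w, (uadd_pure_uadd_pure v w q).symm⟩

lemma orbitClosure_subset {Y : Set (Ultrafilter S)} (hY : IsClosed Y) (hInv : addInvariant Y)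
    {q : Ultrafilter S} (hq : q ∈ Y) : orbitClosure q ⊆ Y :=
  closure_minimal (by rintro _ ⟨v, rfl⟩; exact hInv v q hq) hY

lemma orbitClosure_subset_of_mem {q r : Ultrafilter S} (hr : r ∈ orbitClosure q) :
    orbitClosure r ⊆ orbitClosure q :=
  orbitClosure_subset (isClosed_orbitClosure q) (addInvariant_orbitClosure q) hr

lemma orbitClosure_uadd_pure (v : S) (q : Ultrafilter S) :
    orbitClosure (uadd (pure v) q) = orbitClosure q := by
  refine (orbitClosure_subset_of_mem (uadd_pure_mem_orbitClosure v q)).antisymm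
    (orbitClosure_subset_of_mem ?_)
  simpa only [uadd_pure_uadd_pure, neg_add_cancel, uadd_pure_zero] using
    uadd_pure_mem_orbitClosure (-v) (uadd (pure v) q)

lemma mem_AMI_iff {p : Ultrafilter S} :
    p ∈ AMI S ↔ (∀ v : S, p ≠ pure v) ∧ uadd p p = p ∧
      ∀ q ∈ orbitClosure p, p ∈ orbitClosure q := by
  refine and_congr_right fun _ => and_congr_right fun _ => ⟨?_, fun hmin => ?_⟩
  · rintro ⟨Y, hpY, hY, hInv, hYmin⟩ q hq
    have orbit_eq {r} (hr : r ∈ Y) : orbitClosure r = Y :=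
      hYmin _ (orbitClosure_subset hY hInv hr) ⟨r, mem_orbitClosure_self r⟩
        (isClosed_orbitClosure r) (addInvariant_orbitClosure r)
    rw [orbit_eq (orbitClosure_subset hY hInv hpY hq)]
    exact hpY
  · refine ⟨orbitClosure p, mem_orbitClosure_self p, isClosed_orbitClosure p,
      addInvariant_orbitClosure p, fun Z hZp ⟨q, hq⟩ hZ hInv => hZp.antisymm ?_⟩
    exact orbitClosure_subset hZ hInv (orbitClosure_subset hZ hInv hq (hmin q (hZp hq)))

end OrbitClosure

section AlongAddMonoidHom

variable {S T : Type*} [AddGroup S] [AddCommGroup T]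

/-- `p.map (QuotientAddGroup.mk' H)` is an idempotent ultrafilter on the finite group `T ⧸ H`,
hence principal, hence `pure 0`. -/
lemma addSubgroup_mem_of_uadd_self_eq (H : AddSubgroup T) [H.FiniteIndex] {p : Ultrafilter T}
    (hp : uadd p p = p) : (H : Set T) ∈ p := by
  set π := QuotientAddGroup.mk' H
  obtain ⟨c, hc⟩ := Ultrafilter.eq_pure_of_finite (p.map π)
  have hcc : pure (c + c) = (pure c : Ultrafilter (T ⧸ H)) := by
    rw [← Ultrafilter.map_pure (c + ·), ← uadd_pure_left, ← hc, ← map_uadd, hp]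
  have hc0 : c = 0 := by simpa using Ultrafilter.pure_injective hcc
  have hzero : {(0 : T ⧸ H)} ∈ p.map π := by rw [hc, hc0]; exact Ultrafilter.mem_pure.mpr rfl
  rw [Ultrafilter.mem_map] at hzero
  convert hzero using 1
  ext x
  simp [π]

lemma exists_eq_out_add (f : S →+ T) (x : T) :
    ∃ s, x = (x : T ⧸ f.range).out + f s := by
  obtain ⟨⟨_, s, rfl⟩, hs⟩ := QuotientAddGroup.mk_out_eq_add f.range x
  exact ⟨-s, by rw [hs, map_neg, add_neg_cancel_right]⟩

lemma map_uadd_pure (f : S →+ T) (v : S) (q : Ultrafilter S) :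
    (uadd (pure v) q).map f = uadd (pure (f v)) (q.map f) := by
  rw [map_uadd, Ultrafilter.map_pure]

lemma image_map_orbitClosure_subset (f : S →+ T) (q : Ultrafilter S) :
    Ultrafilter.map f '' orbitClosure q ⊆ orbitClosure (q.map f) := by
  rintro _ ⟨r, hr, rfl⟩
  refine map_mem_closure (continuous_ultrafilter_map f) hr ?_
  rintro _ ⟨v, rfl⟩
  exact ⟨f v, (map_uadd_pure f v q).symm⟩

/-- The right-hand side is closed, being a finite union of continuous images of a compact set,
and it is invariant because `T` is covered by finitely many translates of `f.range`. -/
lemma orbitClosure_map_subset (f : S →+ T) [f.range.FiniteIndex] (q : Ultrafilter S) :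
    orbitClosure (q.map f) ⊆
      ⋃ c : T ⧸ f.range, uadd (pure c.out) '' (Ultrafilter.map f '' orbitClosure q) := by
  have translate {r : Ultrafilter S} (hr : r ∈ orbitClosure q) (x : T) :
      uadd (pure x) (r.map f) ∈
        ⋃ c : T ⧸ f.range, uadd (pure c.out) '' (Ultrafilter.map f '' orbitClosure q) := by
    obtain ⟨s, hs⟩ := exists_eq_out_add f x
    refine mem_iUnion.mpr ⟨x, _, ⟨_, addInvariant_orbitClosure q s r hr, rfl⟩, ?_⟩
    rw [map_uadd_pure, uadd_pure_uadd_pure, ← hs]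
  refine orbitClosure_subset ?_ ?_ ?_
  · refine isClosed_iUnion_of_finite fun c => ?_
    exact (((isClosed_orbitClosure q).isCompact.image (continuous_ultrafilter_map f)).image
      (continuous_uadd_pure _)).isClosed
  · intro v _ hx
    obtain ⟨c, _, ⟨r, hr, rfl⟩, rfl⟩ := mem_iUnion.mp hx
    simpa only [uadd_pure_uadd_pure] using translate hr (v + c.out)
  · simpa only [uadd_pure_zero] using translate (mem_orbitClosure_self q) 0

lemma range_mem_map (f : S →+ T) (s : Ultrafilter S) : (f.range : Set T) ∈ s.map f := by
  rw [Ultrafilter.mem_map, AddMonoidHom.coe_range, preimage_range]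
  exact univ_mem

lemma exists_map_eq_of_mem_orbitClosure_map (f : S →+ T) [f.range.FiniteIndex]
    {r : Ultrafilter S} {p : Ultrafilter T} (hp : p ∈ orbitClosure (r.map f))
    (hrange : (f.range : Set T) ∈ p) : ∃ s ∈ orbitClosure r, s.map f = p := by
  obtain ⟨c, _, ⟨s, hs, rfl⟩, rfl⟩ := mem_iUnion.mp (orbitClosure_map_subset f r hp)
  obtain ⟨_, hy, hcy⟩ : ∃ y ∈ f.range, c.out + y ∈ f.range :=
    Ultrafilter.nonempty_of_mem (inter_mem (range_mem_map f s) (Ultrafilter.mem_map.mp hrange))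
  obtain ⟨w, hw⟩ := (f.range.add_mem_cancel_right hy).mp hcy
  refine ⟨uadd (pure w) s, orbitClosure_subset_of_mem hs (uadd_pure_mem_orbitClosure w s), ?_⟩
  rw [map_uadd_pure, hw]

lemma map_mem_AMI (f : S →+ T) (hf : Injective f) [f.range.FiniteIndex] {p : Ultrafilter S}
    (hp : p ∈ AMI S) : p.map f ∈ AMI T := by
  rw [mem_AMI_iff] at hp ⊢
  obtain ⟨hprincipal, hidem, hmin⟩ := hp
  refine ⟨fun v hv => ?_, by rw [← map_uadd, hidem], fun q hq => ?_⟩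
  · obtain ⟨x, rfl⟩ : v ∈ f.range := by simpa [hv] using range_mem_map f p
    exact hprincipal x (Ultrafilter.map_injective hf (by rw [hv, Ultrafilter.map_pure]))
  · obtain ⟨c, _, ⟨r, hr, rfl⟩, rfl⟩ := mem_iUnion.mp (orbitClosure_map_subset f p hq)
    rw [orbitClosure_uadd_pure]
    exact image_map_orbitClosure_subset f r ⟨p, hmin r hr, rfl⟩

lemma exists_map_eq_of_mem_AMI (f : S →+ T) (hf : Injective f) [f.range.FiniteIndex]
    {p : Ultrafilter T} (hp : p ∈ AMI T) : ∃ q ∈ AMI S, q.map f = p := by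
  have hrange : (f.range : Set T) ∈ p := addSubgroup_mem_of_uadd_self_eq f.range hp.2.1
  set q := p.comap hf (by rwa [← AddMonoidHom.coe_range])
  have hqp : q.map f = p := Ultrafilter.coe_injective <| by
    rw [Ultrafilter.coe_map, Ultrafilter.coe_comap, Filter.map_comap_of_mem]
    rwa [← AddMonoidHom.coe_range]
  refine ⟨q, ?_, hqp⟩
  rw [mem_AMI_iff] at hp ⊢
  obtain ⟨hprincipal, hidem, hmin⟩ := hp
  refine ⟨fun v hv => hprincipal (f v) ?_, ?_, fun r hr => ?_⟩
  · rw [← hqp, hv, Ultrafilter.map_pure]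
  · exact Ultrafilter.map_injective hf (by rw [map_uadd, hqp, hidem])
  · have hpr : p ∈ orbitClosure (r.map f) :=
      hmin _ (hqp ▸ image_map_orbitClosure_subset f q ⟨r, hr, rfl⟩)
    obtain ⟨s, hs, hsp⟩ := exists_map_eq_of_mem_orbitClosure_map f hpr hrange
    rwa [Ultrafilter.map_injective hf (hsp.trans hqp.symm)] at hs

end AlongAddMonoidHom

lemma AddMonoidHom.range_mulLeft {R : Type*} [CommRing R] (u : R) :
    (AddMonoidHom.mulLeft u).range = (Ideal.span {u}).toAddSubgroup := by
  ext x
  simp [Ideal.mem_span_singleton', mul_comm u]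

theorem stmt11_general {R : Type*} [CommRing R] [IsDomain R]
    (hLID : IsLID R)
    (p : Ultrafilter R) (hp : p ∈ closure (AMI R)) (u : R) (hu : u ≠ 0) :
    umul (pure u) p ∈ closure (AMI R) ∧ ∃ q ∈ closure (AMI R), umul (pure u) q = p := by
  simp only [umul_pure_left]
  set f := AddMonoidHom.mulLeft u
  have hf : Injective f := mul_right_injective₀ hu
  have : f.range.FiniteIndex := (AddMonoidHom.range_mulLeft u).symm ▸ hLID u hu
  have hcont : Continuous (Ultrafilter.map f) := continuous_ultrafilter_map f
  refine ⟨map_mem_closure hcont hp fun q hq => map_mem_AMI f hf hq, ?_⟩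
  have hclosed : IsClosed (Ultrafilter.map f '' closure (AMI R)) :=
    (isClosed_closure.isCompact.image hcont).isClosed
  have hsurj : AMI R ⊆ Ultrafilter.map f '' closure (AMI R) := fun r hr =>
    let ⟨q, hq, hqr⟩ := exists_map_eq_of_mem_AMI f hf hr
    ⟨q, subset_closure hq, hqr⟩
  obtain ⟨q, hq, rfl⟩ := closure_minimal hsurj hclosed hp
  exact ⟨q, hq, rfl⟩

/-- Let `R` be a LID, `p` an ultrafilter in the closure of the additive
minimal idempotents, and `u ≠ 0`. Then `pure u · p` lies in the closure of `AMI`, and there is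
`q` in the closure of `AMI` with `pure u · q = p`. -/
theorem stmt11 {R : Type*} [CommRing R] [IsDomain R] [Countable R] [Infinite R]
    (hLID : IsLID R)
    (p : Ultrafilter R) (hp : p ∈ closure (AMI R)) (u : R) (hu : u ≠ 0) :
    umul (pure u) p ∈ closure (AMI R) ∧ ∃ q ∈ closure (AMI R), umul (pure u) q = p :=
  stmt11_general hLID p hp u hu
end

section
/- Let K be an infinite countable field. Then: (i) a set S ⊆ K is affinely syndetic if and only if d̄_{(F_N)}(S) > 0 for every double Følner sequence (F_N) in K; and (ii) a set T ⊆ K is affinely thick if and only if there exists a double Følner sequence (F_N) in K such that the lower density of T with respect to (F_N) equals 1. -/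
/-- A set `S ⊆ R` is affinely syndetic if there are finitely many affine maps
`x ↦ u·x + v` (with `u ≠ 0`) such that every `x ∈ R` is sent into `S` by one of them. -/
def AffSyndetic {R : Type*} [Mul R] [Add R] [Zero R] (S : Set R) : Prop :=
  ∃ F : Finset (R × R), (∀ g ∈ F, g.1 ≠ 0) ∧ ∀ x : R, ∃ g ∈ F, g.1 * x + g.2 ∈ S

/-- A set `T ⊆ R` is affinely thick if for every finite collection of affine maps
`x ↦ u·x + v` (with `u ≠ 0`) there is a single `x` sent into `T` by all of them. -/
def AffThick {R : Type*} [Mul R] [Add R] [Zero R] (T : Set R) : Prop :=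
  ∀ F : Finset (R × R), (∀ g ∈ F, g.1 ≠ 0) → ∃ x : R, ∀ g ∈ F, g.1 * x + g.2 ∈ T

/-- A double Følner sequence in a field `K`: a sequence of nonempty finite subsets of `K`
asymptotically invariant under every translation and under every nonzero dilation. -/
def DoubleFolner {K : Type*} [Field K] (F : ℕ → Finset K) : Prop :=
  (∀ N, (F N).Nonempty) ∧
  (∀ u : K, Filter.Tendsto
    (fun N => ((((F N : Set K) ∩ ((· + u) '' (F N : Set K))).ncard : ℝ) / (F N).card))
    Filter.atTop (nhds 1)) ∧
  (∀ u : K, u ≠ 0 → Filter.Tendsto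
    (fun N => ((((F N : Set K) ∩ ((u * ·) '' (F N : Set K))).ncard : ℝ) / (F N).card))
    Filter.atTop (nhds 1))

/-- The upper density of `E` with respect to the sequence of finite sets `F`. -/
noncomputable def upperDensity {K : Type*} (F : ℕ → Finset K) (E : Set K) : ℝ :=
  Filter.limsup (fun N => ((E ∩ (F N : Set K)).ncard : ℝ) / (F N).card) Filter.atTop

/-- The lower density of `E` with respect to the sequence of finite sets `F`. -/
noncomputable def lowerDensity {K : Type*} (F : ℕ → Finset K) (E : Set K) : ℝ :=
  Filter.liminf (fun N => ((E ∩ (F N : Set K)).ncard : ℝ) / (F N).card) Filter.atTop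

/-!
Syndetic sets have positive density along every double Følner sequence: if `k` affine maps
cover `K` by pulling back `S`, then, because an affine image of a Følner set `F` differs from `F`
in `o(|F|)` points, `|S ∩ F| ≥ |F| / k - o(|F|)`.

Conversely, every affinely thick set `T` contains the sets of a double Følner sequence. The affine
maps `x ↦ w * (x + s)` with `w ∈ Φ`, `s ∈ S₀` form an almost invariant set `P` for finitely many
given affine maps, as soon as `Φ ⊆ Kˣ` and `S₀ ⊆ K` are almost invariant; such sets exist in any
commutative group because the powers of a finite generating set grow only polynomially. Thickness
provides a point `x` with `P x ⊆ T` at which the maps of `P` take distinct values, and `P x` is then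
an almost invariant subset of `T`. Since a set that is not thick has a syndetic complement, and
`upperDensity F Tᶜ = 1 - lowerDensity F T`, both equivalences follow.
-/

open Finset Filter Topology
open scoped Pointwise

theorem Nat.eventually_mul_pow_lt_succ_pow (k : ℕ) {n : ℕ} (hn : n ≠ 0) :
    ∀ᶠ M in atTop, n ^ M * (M + 1) ^ k < (n + 1) ^ M := by
  set r : ℝ := (n + 1) / n
  have hr : 1 < r := by rw [one_lt_div (by positivity)]; simp
  have hlim : Tendsto (fun M : ℕ => r * (((M + 1 : ℕ) : ℝ) ^ k / r ^ (M + 1))) atTop (𝓝 0) := by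
    simpa using ((tendsto_pow_const_div_const_pow_of_one_lt k hr).comp
      (tendsto_add_atTop_nat 1)).const_mul r
  filter_upwards [hlim.eventually (gt_mem_nhds one_pos)] with M hM
  have hrM : (0 : ℝ) < r ^ M := by positivity
  rw [pow_succ, ← div_div, mul_div_cancel₀ _ (by positivity : r ≠ 0), div_lt_one hrM] at hM
  have key : (n : ℝ) ^ M * r ^ M = ((n : ℝ) + 1) ^ M := by
    rw [← mul_pow, mul_div_cancel₀ _ (by positivity : (n : ℝ) ≠ 0)]
  exact_mod_cast (mul_lt_mul_of_pos_left hM (by positivity : (0 : ℝ) < n ^ M)).trans_eq key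

theorem Nat.exists_mul_sub_le_of_le_pow {a : ℕ → ℕ} {k : ℕ} (h0 : 0 < a 0)
    (hpoly : ∀ M, a M ≤ (M + 1) ^ k) (n : ℕ) : ∃ M, n * (a (M + 1) - a M) ≤ a M := by
  by_contra! hgrow
  have hn : n ≠ 0 := by rintro rfl; simpa using hgrow 0
  have hexp : ∀ M, (n + 1) ^ M ≤ n ^ M * a M := by
    intro M
    induction M with
    | zero => rw [pow_zero, pow_zero, one_mul]; exact h0
    | succ M ih =>
      have h := hgrow M
      have : (n + 1) * a M ≤ n * a (M + 1) := by
        rw [Nat.mul_sub] at h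
        rw [add_mul, one_mul]
        omega
      calc (n + 1) ^ (M + 1) = (n + 1) ^ M * (n + 1) := pow_succ _ _
        _ ≤ n ^ M * a M * (n + 1) := Nat.mul_le_mul_right _ ih
        _ = n ^ M * ((n + 1) * a M) := by ring
        _ ≤ n ^ M * (n * a (M + 1)) := Nat.mul_le_mul_left _ this
        _ = n ^ (M + 1) * a (M + 1) := by ring
  obtain ⟨M, hM⟩ := (Nat.eventually_mul_pow_lt_succ_pow k hn).exists
  exact (hM.trans_le ((hexp M).trans (Nat.mul_le_mul_left _ (hpoly M)))).false

namespace Finset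

variable {G : Type*} [DecidableEq G]

@[to_additive]
theorem pow_subset_image_piFinset [CommMonoid G] (B : Finset G) (M : ℕ) :
    B ^ M ⊆
      (Fintype.piFinset fun _ : B => range (M + 1)).image fun e => ∏ b : B, (b : G) ^ e b := by
  induction M with
  | zero =>
    intro x hx
    rw [pow_zero, mem_one] at hx
    exact mem_image.2 ⟨fun _ => 0, by simp, by simp [hx]⟩
  | succ M ih =>
    intro x hx
    obtain ⟨y, hy, b, hb, rfl⟩ := mem_mul.1 (pow_succ B M ▸ hx)
    obtain ⟨e, he, rfl⟩ := mem_image.1 (ih hy)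
    simp only [Fintype.mem_piFinset, mem_range] at he
    refine mem_image.2 ⟨fun c => e c + if (⟨b, hb⟩ : B) = c then 1 else 0, ?_, ?_⟩
    · simp only [Fintype.mem_piFinset, mem_range]
      intro c
      have := he c
      split <;> omega
    · simp only [pow_add, prod_mul_distrib, prod_pow_boole, mem_univ, if_true]

@[to_additive]
theorem card_pow_le_succ_pow_card [CommMonoid G] (B : Finset G) (M : ℕ) :
    #(B ^ M) ≤ (M + 1) ^ #B := by
  calc #(B ^ M) ≤ #(Fintype.piFinset fun _ : B => range (M + 1)) :=
        (card_le_card (pow_subset_image_piFinset B M)).trans card_image_le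
    _ = (M + 1) ^ #B := by simp

end Finset

@[to_additive]
theorem exists_finset_almost_smul_invariant {G : Type*} [DecidableEq G] [CommGroup G]
    (A : Finset G) (n : ℕ) :
    ∃ Φ : Finset G, Φ.Nonempty ∧ ∀ a ∈ A, n * #(Φ \ a • Φ) ≤ #Φ := by
  set B := insert 1 A
  obtain ⟨M, hM⟩ := Nat.exists_mul_sub_le_of_le_pow (a := fun M => #(B ^ M))
    (card_pos.2 ⟨1, one_mem_pow (mem_insert_self 1 A)⟩) (card_pow_le_succ_pow_card B) n
  refine ⟨B ^ M, ⟨1, one_mem_pow (mem_insert_self 1 A)⟩, fun a ha => ?_⟩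
  have hsub : a • B ^ M ⊆ B ^ (M + 1) :=
    pow_succ' B M ▸ smul_finset_subset_mul (mem_insert_of_mem ha)
  calc n * #(B ^ M \ a • B ^ M) ≤ n * #(B ^ (M + 1) \ a • B ^ M) :=
        Nat.mul_le_mul_left n (card_le_card (sdiff_subset_sdiff (pow_subset_pow_right
          (mem_insert_self 1 A) M.le_succ) subset_rfl))
    _ = n * (#(B ^ (M + 1)) - #(B ^ M)) := by rw [card_sdiff_of_subset hsub, card_smul_finset]
    _ ≤ #(B ^ M) := hM

section AffineMaps

variable {K : Type*} [Field K]

/-- The pair `(u, v)` encodes the affine map `x ↦ u * x + v`; `affineComp g p` encodes `g ∘ p`. -/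
def affineComp (g p : K × K) : K × K := (g.1 * p.1, g.1 * p.2 + g.2)

/-- `mulShift (w, s)` encodes `x ↦ w * (x + s)`. -/
def mulShift (q : Kˣ × K) : K × K := (q.1, q.1 * q.2)

theorem mulShift_injective : Function.Injective (mulShift (K := K)) := by
  rintro ⟨w, s⟩ ⟨w', s'⟩ h
  simp only [mulShift, Prod.mk.injEq, Units.val_inj] at h
  obtain ⟨rfl, h⟩ := h
  simp [mul_right_injective₀ w.ne_zero h]

theorem AffThick.exists_notMem_forall_mem [Infinite K] {T : Set K} (hT : AffThick T)
    {P : Finset (K × K)} (hP : ∀ p ∈ P, p.1 ≠ 0) (B : Finset K) :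
    ∃ x ∉ B, ∀ p ∈ P, p.1 * x + p.2 ∈ T := by
  classical
  obtain ⟨C, hC⟩ := Infinite.exists_subset_card_eq K (#B + 1)
  obtain ⟨x₀, hx₀⟩ := hT ((P ×ˢ C).image fun q => (q.1.1, q.1.1 * q.2 + q.1.2)) (by
    simp only [mem_image, mem_product]
    rintro _ ⟨q, ⟨hq, -⟩, rfl⟩
    exact hP q.1 hq)
  obtain ⟨c, hc, hcB⟩ : ∃ c ∈ C, x₀ + c ∉ B := by
    by_contra! h
    have := card_le_card_of_injOn (x₀ + ·) h (add_right_injective x₀).injOn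
    omega
  refine ⟨x₀ + c, hcB, fun p hp => ?_⟩
  convert hx₀ _ (mem_image.2 ⟨(p, c), mem_product.2 ⟨hp, hc⟩, rfl⟩) using 1
  ring

variable [DecidableEq K]

theorem sdiff_image_affineComp_subset (Φ : Finset Kˣ) (S₀ : Finset K) {g : K × K}
    (hg : g.1 ≠ 0) :
    (Φ ×ˢ S₀).image mulShift \ ((Φ ×ˢ S₀).image mulShift).image (affineComp g) ⊆
      ((Φ \ Units.mk0 g.1 hg • Φ) ×ˢ S₀ ∪
        Φ.biUnion fun w => {w} ×ˢ (S₀ \ ((g.2 / (w : K)) +ᵥ S₀))).image mulShift := by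
  intro p hp
  obtain ⟨hpP, hpg⟩ := mem_sdiff.1 hp
  obtain ⟨⟨w, s⟩, hws, rfl⟩ := mem_image.1 hpP
  obtain ⟨hw, hs⟩ : w ∈ Φ ∧ s ∈ S₀ := mem_product.1 hws
  refine mem_image_of_mem mulShift ?_
  by_cases hwu : w ∈ Units.mk0 g.1 hg • Φ
  · obtain ⟨w₀, hw₀, rfl⟩ := mem_smul_finset.1 hwu
    refine mem_union_right _ (mem_biUnion.2 ⟨_, hw, mem_product.2
      ⟨mem_singleton_self _, mem_sdiff.2 ⟨hs, fun hshift => hpg ?_⟩⟩⟩)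
    obtain ⟨s', hs', rfl⟩ := mem_vadd_finset.1 hshift
    refine mem_image.2 ⟨mulShift (w₀, s'), mem_image_of_mem _ (mem_product.2 ⟨hw₀, hs'⟩), ?_⟩
    have := w₀.ne_zero
    simp only [mulShift, affineComp, smul_eq_mul, Units.val_mul, Units.val_mk0, vadd_eq_add,
      Prod.mk.injEq]
    field_simp
    exact ⟨trivial, by ring⟩
  · exact mem_union_left _ (mem_product.2 ⟨mem_sdiff.2 ⟨hw, hwu⟩, hs⟩)

theorem exists_finset_almost_affineComp_invariant (H : Finset (K × K)) (hH : ∀ g ∈ H, g.1 ≠ 0)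
    (n : ℕ) :
    ∃ P : Finset (K × K), P.Nonempty ∧ (∀ p ∈ P, p.1 ≠ 0) ∧
      ∀ g ∈ H, n * #(P \ P.image (affineComp g)) ≤ 2 * #P := by
  obtain ⟨Φ, hΦ, hΦinv⟩ := exists_finset_almost_smul_invariant
    ((H.image Prod.fst).preimage Units.val Units.val_injective.injOn) n
  obtain ⟨S₀, hS₀, hS₀inv⟩ := exists_finset_almost_vadd_invariant
    ((H ×ˢ Φ).image fun q => q.1.2 / (q.2 : K)) n
  refine ⟨(Φ ×ˢ S₀).image mulShift, (hΦ.product hS₀).image mulShift, ?_, fun g hg => ?_⟩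
  · simp only [mem_image, mem_product]
    rintro _ ⟨q, -, rfl⟩
    exact q.1.ne_zero
  calc n * #((Φ ×ˢ S₀).image mulShift \ ((Φ ×ˢ S₀).image mulShift).image (affineComp g))
      ≤ n * (#(Φ \ Units.mk0 g.1 (hH g hg) • Φ) * #S₀
          + ∑ w ∈ Φ, #(S₀ \ ((g.2 / (w : K)) +ᵥ S₀))) := by
        gcongr
        refine (card_le_card (sdiff_image_affineComp_subset Φ S₀ (hH g hg))).trans ?_
        refine card_image_le.trans ((card_union_le _ _).trans ?_)
        rw [card_product]
        gcongr
        exact card_biUnion_le.trans (by simp)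
    _ ≤ #Φ * #S₀ + ∑ w ∈ Φ, #S₀ := by
        rw [mul_add, mul_sum, ← mul_assoc]
        gcongr with w hw
        · exact hΦinv _ (by simpa using mem_image_of_mem Prod.fst hg)
        · exact hS₀inv _ (mem_image.2 ⟨(g, w), mem_product.2 ⟨hg, hw⟩, rfl⟩)
    _ = 2 * #((Φ ×ˢ S₀).image mulShift) := by
        rw [card_image_of_injective _ mulShift_injective, card_product, sum_const, smul_eq_mul]
        ring

/-- The solutions `x` of `p.1 * x + p.2 = q.1 * x + q.2` for `p, q ∈ P`; when `p.1 = q.1` there is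
no solution and division by zero contributes a harmless `0`. -/
def collisionPoints (P : Finset (K × K)) : Finset K :=
  (P ×ˢ P).image fun pq => (pq.2.2 - pq.1.2) / (pq.1.1 - pq.2.1)

theorem injOn_of_notMem_collisionPoints {P : Finset (K × K)} {x : K}
    (hx : x ∉ collisionPoints P) : Set.InjOn (fun p : K × K => p.1 * x + p.2) P := by
  intro p hp q hq hpq
  by_cases h1 : p.1 = q.1
  · simp only [h1, add_right_inj] at hpq
    exact Prod.ext h1 hpq
  · refine absurd (mem_image.2 ⟨(p, q), mem_product.2 ⟨hp, hq⟩, ?_⟩) hx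
    rw [div_eq_iff (sub_ne_zero.2 h1)]
    linear_combination -hpq

theorem card_sdiff_image_eval_le (P : Finset (K × K)) (g : K × K) (x : K) :
    #(P.image (fun p => p.1 * x + p.2) \ (P.image fun p => p.1 * x + p.2).image
      (fun y => g.1 * y + g.2)) ≤ #(P \ P.image (affineComp g)) := by
  refine card_le_card_of_surjOn (fun p => p.1 * x + p.2) fun y hy => ?_
  obtain ⟨hyP, hyg⟩ := mem_sdiff.1 hy
  obtain ⟨p, hp, rfl⟩ := mem_image.1 hyP
  refine ⟨p, mem_sdiff.2 ⟨hp, fun hpg => hyg ?_⟩, rfl⟩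
  obtain ⟨q, hq, rfl⟩ := mem_image.1 hpg
  exact mem_image.2 ⟨_, mem_image_of_mem _ hq, by simp only [affineComp]; ring⟩

end AffineMaps

section FolnerSequences

variable {α : Type*} [DecidableEq α]

theorem ncard_inter_image_div_card {F : Finset α} (hF : F.Nonempty) (φ : α → α) :
    (((F : Set α) ∩ φ '' F).ncard : ℝ) / #F = 1 - #(F \ F.image φ) / #F := by
  have hsplit := card_inter_add_card_sdiff F (F.image φ)
  rw [← coe_image, ← coe_inter, Set.ncard_coe_finset, eq_sub_iff_add_eq, ← add_div,
    ← Nat.cast_add, hsplit, div_self (by exact_mod_cast hF.card_pos.ne')]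

theorem tendsto_ncard_inter_image_div_iff {F : ℕ → Finset α} (hF : ∀ N, (F N).Nonempty)
    (φ : α → α) :
    Tendsto (fun N => (((F N : Set α) ∩ φ '' F N).ncard : ℝ) / #(F N)) atTop (𝓝 1) ↔
      Tendsto (fun N => (#(F N \ (F N).image φ) : ℝ) / #(F N)) atTop (𝓝 0) := by
  simp_rw [ncard_inter_image_div_card (hF _)]
  constructor <;> intro h
  · simpa using (tendsto_const_nhds (x := (1 : ℝ))).sub h
  · simpa using (tendsto_const_nhds (x := (1 : ℝ))).sub h

theorem card_sdiff_image_comp_le (F : Finset α) (φ ψ : α → α) :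
    #(F \ F.image (ψ ∘ φ)) ≤ #(F \ F.image ψ) + #(F \ F.image φ) := by
  calc #(F \ F.image (ψ ∘ φ)) ≤ #(F \ F.image ψ ∪ (F \ F.image φ).image ψ) := card_le_card ?_
    _ ≤ #(F \ F.image ψ) + #((F \ F.image φ).image ψ) := card_union_le _ _
    _ ≤ _ := Nat.add_le_add_left card_image_le _
  intro y hy
  obtain ⟨hyF, hyψφ⟩ := mem_sdiff.1 hy
  by_cases hyψ : y ∈ F.image ψ
  · obtain ⟨z, hz, rfl⟩ := mem_image.1 hyψ
    refine mem_union_right _ (mem_image_of_mem ψ (mem_sdiff.2 ⟨hz, fun hzφ => hyψφ ?_⟩))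
    rw [← image_image]
    exact mem_image_of_mem ψ hzφ
  · exact mem_union_left _ (mem_sdiff.2 ⟨hyF, hyψ⟩)

end FolnerSequences

theorem tendsto_div_of_succ_mul_le {d c : ℕ → ℕ} (h : ∀ᶠ N in atTop, (N + 1) * d N ≤ 2 * c N) :
    Tendsto (fun N => (d N : ℝ) / c N) atTop (𝓝 0) := by
  have hlim : Tendsto (fun N : ℕ => 2 / ((N : ℝ) + 1)) atTop (𝓝 0) :=
    tendsto_const_div_atTop_nhds_zero_nat 2 |>.comp (tendsto_add_atTop_nat 1) |>.congr
      fun N => by simp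
  refine tendsto_of_tendsto_of_tendsto_of_le_of_le' tendsto_const_nhds hlim
    (Eventually.of_forall fun N => by positivity) ?_
  filter_upwards [h] with N hN
  rcases (c N).eq_zero_or_pos with hc | hc
  · rw [hc, Nat.cast_zero, div_zero]
    positivity
  · rw [div_le_div_iff₀ (by exact_mod_cast hc) (by positivity)]
    exact_mod_cast (by linarith : d N * (N + 1) ≤ 2 * c N)

section DoubleFolner

variable {K : Type*} [Field K]

theorem doubleFolner_iff [DecidableEq K] {F : ℕ → Finset K} :
    DoubleFolner F ↔ (∀ N, (F N).Nonempty) ∧ ∀ u v : K, u ≠ 0 →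
      Tendsto (fun N => (#(F N \ (F N).image fun y => u * y + v) : ℝ) / #(F N)) atTop (𝓝 0) := by
  refine ⟨fun ⟨hne, htrans, hdil⟩ => ⟨hne, fun u v hu => ?_⟩,
    fun ⟨hne, h⟩ => ⟨hne, fun u => ?_, fun u hu => ?_⟩⟩
  · have ht := (tendsto_ncard_inter_image_div_iff hne _).1 (htrans v)
    have hd := (tendsto_ncard_inter_image_div_iff hne _).1 (hdil u hu)
    refine squeeze_zero (fun N => by positivity) (fun N => ?_)
      (by simpa only [add_zero] using ht.add hd)
    rw [← add_div]
    gcongr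
    norm_cast
    exact card_sdiff_image_comp_le (F N) (u * ·) (· + v)
  · simpa using (tendsto_ncard_inter_image_div_iff hne _).2 (h 1 u one_ne_zero)
  · simpa using (tendsto_ncard_inter_image_div_iff hne _).2 (h u 0 hu)

theorem AffThick.exists_doubleFolner_subset [Countable K] [Infinite K] {T : Set K}
    (hT : AffThick T) : ∃ F : ℕ → Finset K, DoubleFolner F ∧ ∀ N, ↑(F N) ⊆ T := by
  classical
  obtain ⟨f, hf⟩ := exists_surjective_nat K
  set H : ℕ → Finset (K × K) := fun N =>
    {g ∈ (range (N + 1)).image f ×ˢ (range (N + 1)).image f | g.1 ≠ 0}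
  have hH0 : ∀ N, ∀ g ∈ H N, g.1 ≠ 0 := fun N g hg => (mem_filter.1 hg).2
  have hH : ∀ g : K × K, g.1 ≠ 0 → ∀ᶠ N in atTop, g ∈ H N := by
    intro g hg
    obtain ⟨i, hi⟩ := hf g.1
    obtain ⟨j, hj⟩ := hf g.2
    filter_upwards [eventually_ge_atTop (max i j)] with N hN
    simp only [H, mem_filter, mem_product, mem_image, mem_range]
    exact ⟨⟨⟨i, by omega, hi⟩, ⟨j, by omega, hj⟩⟩, hg⟩
  choose P hPne hP0 hPinv using fun N =>
    exists_finset_almost_affineComp_invariant (H N) (hH0 N) (N + 1)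
  choose x hxB hxT using fun N => hT.exists_notMem_forall_mem (hP0 N) (collisionPoints (P N))
  refine ⟨fun N => (P N).image fun p => p.1 * x N + p.2,
    doubleFolner_iff.2 ⟨fun N => (hPne N).image _, fun u v hu => ?_⟩, fun N => ?_⟩
  · refine tendsto_div_of_succ_mul_le ?_
    filter_upwards [hH (u, v) hu] with N hN
    rw [card_image_of_injOn (injOn_of_notMem_collisionPoints (hxB N))]
    exact (Nat.mul_le_mul_left _ (card_sdiff_image_eval_le (P N) (u, v) (x N))).trans
      (hPinv N _ hN)
  · rw [coe_image]
    exact Set.image_subset_iff.2 (hxT N)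

end DoubleFolner

section Density

variable {α : Type*} {F : ℕ → Finset α}

theorem ncard_inter_div_card_le_one (E : Set α) (N : ℕ) :
    ((E ∩ F N).ncard : ℝ) / #(F N) ≤ 1 := by
  refine div_le_one_of_le₀ ?_ (Nat.cast_nonneg _)
  exact_mod_cast (Set.ncard_le_ncard Set.inter_subset_right (F N).finite_toSet).trans_eq
    (Set.ncard_coe_finset _)

theorem upperDensity_compl (hF : ∀ N, (F N).Nonempty) (E : Set α) :
    upperDensity F Eᶜ = 1 - lowerDensity F E := by
  have hcompl : ∀ N,
      ((Eᶜ ∩ F N).ncard : ℝ) / #(F N) = 1 - ((E ∩ F N).ncard : ℝ) / #(F N) := by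
    intro N
    have hsplit := Set.ncard_inter_add_ncard_sdiff_eq_ncard (F N : Set α) E (F N).finite_toSet
    rw [Set.ncard_coe_finset] at hsplit
    rw [Set.inter_comm Eᶜ, ← Set.sdiff_eq, Set.inter_comm E, eq_sub_iff_add_eq, ← add_div,
      ← Nat.cast_add, add_comm, hsplit, div_self (by exact_mod_cast (hF N).card_pos.ne')]
  simp_rw [upperDensity, lowerDensity, hcompl]
  exact limsup_const_sub _ _ _
    (isBoundedUnder_of ⟨1, ncard_inter_div_card_le_one E⟩).isCoboundedUnder_flip
    (isBoundedUnder_of ⟨0, fun N => by positivity⟩)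

theorem lowerDensity_eq_one_of_subset (hF : ∀ N, (F N).Nonempty) {E : Set α}
    (hFE : ∀ N, ↑(F N) ⊆ E) : lowerDensity F E = 1 := by
  have hone : ∀ N, ((E ∩ F N).ncard : ℝ) / #(F N) = 1 := fun N => by
    rw [Set.inter_eq_self_of_subset_right (hFE N), Set.ncard_coe_finset,
      div_self (by exact_mod_cast (hF N).card_pos.ne')]
  simp_rw [lowerDensity, hone, liminf_const]

theorem ncard_inter_coe_eq_card_filter (E : Set α) [DecidablePred (· ∈ E)] (F : Finset α) :
    (E ∩ F).ncard = #{y ∈ F | y ∈ E} := by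
  rw [← Set.ncard_coe_finset, coe_filter, Set.inter_comm, Set.inter_def]
  rfl

theorem card_filter_comp_mem_le [DecidableEq α] (F : Finset α) {g : α → α}
    (hg : Function.Injective g) (E : Set α) [DecidablePred (· ∈ E)] :
    #{y ∈ F | g y ∈ E} ≤ #{y ∈ F | y ∈ E} + #(F \ F.image g) := by
  rw [← card_sdiff_comm (card_image_of_injective F hg), ← card_image_of_injective _ hg]
  refine (card_le_card fun z hz => ?_).trans (card_union_le _ _)
  obtain ⟨y, hy, rfl⟩ := mem_image.1 hz
  rw [mem_filter] at hy
  by_cases hgy : g y ∈ F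
  · exact mem_union_left _ (mem_filter.2 ⟨hgy, hy.2⟩)
  · exact mem_union_right _ (mem_sdiff.2 ⟨mem_image_of_mem g hy.1, hgy⟩)

end Density

theorem not_affThick_iff_affSyndetic_compl {R : Type*} [Mul R] [Add R] [Zero R] {T : Set R} :
    ¬ AffThick T ↔ AffSyndetic Tᶜ := by
  simp only [AffThick, AffSyndetic, not_forall, not_exists, exists_prop, Set.mem_compl_iff]

section Syndetic

variable {K : Type*} [Field K]

theorem card_le_of_affine_cover [DecidableEq K] {S : Set K} [DecidablePred (· ∈ S)]
    (F : Finset K) {G : Finset (K × K)} (hG0 : ∀ g ∈ G, g.1 ≠ 0)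
    (hcover : ∀ x, ∃ g ∈ G, g.1 * x + g.2 ∈ S) :
    #F ≤ #G * #{y ∈ F | y ∈ S} + ∑ g ∈ G, #(F \ F.image fun y => g.1 * y + g.2) := by
  have hinj : ∀ g ∈ G, Function.Injective fun y : K => g.1 * y + g.2 := fun g hg a b hab =>
    mul_left_cancel₀ (hG0 g hg) (add_right_cancel hab)
  calc #F ≤ #(G.biUnion fun g => {y ∈ F | g.1 * y + g.2 ∈ S}) := card_le_card fun y hy =>
        let ⟨g, hg, hgy⟩ := hcover y; mem_biUnion.2 ⟨g, hg, mem_filter.2 ⟨hy, hgy⟩⟩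
    _ ≤ ∑ g ∈ G, #{y ∈ F | g.1 * y + g.2 ∈ S} := card_biUnion_le
    _ ≤ ∑ g ∈ G, (#{y ∈ F | y ∈ S} + #(F \ F.image fun y => g.1 * y + g.2)) :=
        sum_le_sum fun g hg => card_filter_comp_mem_le F (hinj g hg) S
    _ = _ := by rw [sum_add_distrib, sum_const, smul_eq_mul]

theorem AffSyndetic.upperDensity_pos {S : Set K} (hS : AffSyndetic S) {F : ℕ → Finset K}
    (hF : DoubleFolner F) : 0 < upperDensity F S := by
  classical
  obtain ⟨G, hG0, hcover⟩ := hS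
  obtain ⟨hne, haff⟩ := doubleFolner_iff.1 hF
  have hGpos : (0 : ℝ) < #G := by
    obtain ⟨g, hg, -⟩ := hcover 0
    exact_mod_cast card_pos.2 ⟨g, hg⟩
  have hδ : Tendsto (fun N => ∑ g ∈ G, (#(F N \ (F N).image fun y => g.1 * y + g.2) : ℝ) / #(F N))
      atTop (𝓝 0) := by
    simpa using tendsto_finsetSum G fun g hg => haff g.1 g.2 (hG0 g hg)
  have hfreq : ∃ᶠ N in atTop, 1 / (2 * #G) ≤ ((S ∩ F N).ncard : ℝ) / #(F N) := by
    refine Eventually.frequently ?_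
    filter_upwards [hδ.eventually (gt_mem_nhds (by norm_num : (0 : ℝ) < 1 / 2))] with N hN
    have hFN : (0 : ℝ) < #(F N) := by exact_mod_cast (hne N).card_pos
    have hcount : (#(F N) : ℝ) ≤ #G * #{y ∈ F N | y ∈ S} +
        ∑ g ∈ G, (#(F N \ (F N).image fun y => g.1 * y + g.2) : ℝ) := by
      exact_mod_cast card_le_of_affine_cover (F N) hG0 hcover
    rw [← sum_div, div_lt_iff₀ hFN] at hN
    rw [ncard_inter_coe_eq_card_filter, div_le_div_iff₀ (by positivity) hFN]
    nlinarith
  exact (by positivity : (0 : ℝ) < 1 / (2 * #G)).trans_le (le_limsup_of_frequently_le hfreq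
    (isBoundedUnder_of ⟨1, ncard_inter_div_card_le_one S⟩))

end Syndetic

/-- In an infinite countable field `K`: (i) `S ⊆ K` is affinely syndetic iff
its upper density is positive with respect to every double Følner sequence; (ii) `T ⊆ K` is
affinely thick iff there is a double Følner sequence with respect to which its lower density
is `1`. -/
theorem stmt12 (K : Type*) [Field K] [Countable K] [Infinite K] :
    (∀ S : Set K, AffSyndetic S ↔
      ∀ F : ℕ → Finset K, DoubleFolner F → 0 < upperDensity F S) ∧
    (∀ T : Set K, AffThick T ↔
      ∃ F : ℕ → Finset K, DoubleFolner F ∧ lowerDensity F T = 1) := by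
  refine ⟨fun S => ⟨fun hS F hF => hS.upperDensity_pos hF, fun h => ?_⟩,
    fun T => ⟨fun hT => ?_, fun ⟨F, hF, hT⟩ => ?_⟩⟩
  · by_contra hS
    have hthick : AffThick Sᶜ := by
      by_contra hthick
      exact hS (compl_compl S ▸ not_affThick_iff_affSyndetic_compl.1 hthick)
    obtain ⟨F, hF, hFS⟩ := hthick.exists_doubleFolner_subset
    have hzero : upperDensity F S = 0 := by
      rw [← compl_compl S, upperDensity_compl hF.1, lowerDensity_eq_one_of_subset hF.1 hFS,
        sub_self]
    exact (h F hF).ne' hzero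
  · obtain ⟨F, hF, hFT⟩ := hT.exists_doubleFolner_subset
    exact ⟨F, hF, lowerDensity_eq_one_of_subset hF.1 hFT⟩
  · by_contra hthick
    have hpos := (not_affThick_iff_affSyndetic_compl.1 hthick).upperDensity_pos hF
    rw [upperDensity_compl hF.1, hT, sub_self] at hpos
    exact hpos.false
end

section
/- Let R be a LID. Then every affinely thick set T ⊆ R is DC; that is, there exists an ultrafilter p ∈ 𝒢 with T ∈ p. -/
open Filter

/-! The ultrafilters containing every affine preimage `{x | u * x + v ∈ T}` of `T` form a closed
set, nonempty by affine thickness and compactness of `βR`, invariant under both translations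
`q ↦ v + q` and dilations `q ↦ u · q`. Inside its nonprincipal part, Zorn's lemma gives a minimal
closed translation-invariant set and Ellis' theorem an idempotent in it: an additive minimal
idempotent. In a LID, dilating an additive minimal idempotent `p` by `u ≠ 0` gives another one:
as `uR` has finite index, every ultrafilter is a translate of one concentrated on `uR`, which makes
`βR + u·p` minimal again. So `closure (AMI R)` is dilation-invariant, and the same Zorn–Ellis
argument for dilations, run inside `closure (AMI R)`, yields the required multiplicative minimal
idempotent. -/

open Set

attribute [local instance] Ultrafilter.add Ultrafilter.addSemigroup Ultrafilter.mul
  Ultrafilter.semigroup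

namespace Ultrafilter

variable {α β : Type*}

theorem continuous_map (f : α → β) : Continuous (Ultrafilter.map f) := by
  refine ultrafilterBasis_is_basis.continuous_iff.2 ?_
  rintro _ ⟨s, rfl⟩
  exact ultrafilter_isOpen_basic (f ⁻¹' s)

theorem map_add {F : Type*} [Add α] [Add β] [FunLike F α β] [AddHomClass F α β] (f : F)
    (p q : Ultrafilter α) :
    (p + q).map f = p.map f + q.map f := by
  ext s
  change {u | {v | f (u + v) ∈ s} ∈ q} ∈ p ↔ {u | {v | f u + f v ∈ s} ∈ q} ∈ p
  simp only [_root_.map_add]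

theorem pure_add [Add α] (v : α) (q : Ultrafilter α) : pure v + q = q.map (v + ·) := rfl

theorem pure_neg_add_pure_add [AddGroup α] (v : α) (q : Ultrafilter α) :
    pure (-v) + (pure v + q) = q := by
  simp only [pure_add, map_map]
  convert map_id q using 2
  ext x; simp

theorem exists_map_eq_of_range_mem [Nonempty α] {f : α → β} {q : Ultrafilter β}
    (hq : range f ∈ q) : ∃ q₀ : Ultrafilter α, q₀.map f = q := by
  refine ⟨q.map (Function.invFun f), coe_injective ?_⟩
  rw [coe_map, coe_map, Filter.map_map]
  exact (Filter.map_congr (Filter.mem_of_superset hq fun _ => Function.invFun_eq)).trans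
    Filter.map_id

theorem exists_eq_pure_add_of_finiteIndex {G : Type*} [AddGroup G] (H : AddSubgroup G)
    [H.FiniteIndex] (r : Ultrafilter G) :
    ∃ v : G, ∃ s : Ultrafilter G, (H : Set G) ∈ s ∧ r = pure v + s := by
  have : Finite (G ⧸ H) := H.finite_quotient_of_finiteIndex
  obtain ⟨c, hc⟩ := (r.map (QuotientAddGroup.mk : G → G ⧸ H)).eq_pure_of_finite
  obtain ⟨v, rfl⟩ := QuotientAddGroup.mk_surjective c
  have hv : ({(v : G ⧸ H)} : Set (G ⧸ H)) ∈ r.map QuotientAddGroup.mk := hc ▸ mem_pure.mpr rfl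
  refine ⟨v, pure (-v) + r, mem_map.mpr (mem_of_superset (mem_map.mp hv)
    fun x (hx : (x : G ⧸ H) = v) => QuotientAddGroup.eq.mp hx.symm), ?_⟩
  simpa using (pure_neg_add_pure_add (-v) r).symm

end Ultrafilter

theorem IsClosed.apply_mem_of_pure_mem {α X : Type*} [TopologicalSpace X] {Y : Set X}
    (hY : IsClosed Y) {f : Ultrafilter α → X} (hf : Continuous f) {E : Set α}
    (hE : ∀ v ∈ E, f (pure v) ∈ Y) {r : Ultrafilter α} (hr : E ∈ r) : f r ∈ Y :=
  hY.mem_of_tendsto ((hf.tendsto r).comp (Ultrafilter.tendsto_pure_self r))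
    (Filter.mem_of_superset hr hE)

section Nonprincipal

variable {α β : Type*}

def nonprincipal (α : Type*) : Set (Ultrafilter α) := {p | ∀ x : α, ({x}ᶜ : Set α) ∈ p}

theorem mem_nonprincipal_iff {p : Ultrafilter α} : p ∈ nonprincipal α ↔ ∀ x, p ≠ pure x := by
  refine forall_congr' fun x => ?_
  rw [Ultrafilter.compl_mem_iff_notMem, not_iff_not]
  constructor
  · intro h
    obtain ⟨y, hy, rfl⟩ := Ultrafilter.eq_pure_of_finite_mem (finite_singleton x) h
    rw [mem_singleton_iff.mp hy]
  · rintro rfl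
    exact Ultrafilter.mem_pure.mpr rfl

theorem isClosed_nonprincipal : IsClosed (nonprincipal α) := by
  simp only [nonprincipal, ofPred_forall]
  exact isClosed_iInter fun x => ultrafilter_isClosed_basic _

theorem hyperfilter_mem_nonprincipal [Infinite α] : hyperfilter α ∈ nonprincipal α :=
  fun x => compl_mem_hyperfilter_of_finite (finite_singleton x)

theorem notMem_of_subsingleton {p : Ultrafilter α} (hp : p ∈ nonprincipal α) {s : Set α}
    (hs : s.Subsingleton) : s ∉ p := by
  rcases hs.eq_empty_or_singleton with rfl | ⟨x, rfl⟩
  · exact Ultrafilter.empty_notMem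
  · exact Ultrafilter.compl_mem_iff_notMem.mp (hp x)

theorem map_mem_nonprincipal {f : α → β} (hf : Function.Injective f) {p : Ultrafilter α}
    (hp : p ∈ nonprincipal α) : p.map f ∈ nonprincipal β := fun _ =>
  Ultrafilter.compl_mem_iff_notMem.mpr <|
    notMem_of_subsingleton hp fun _ ha _ hb => hf (ha.trans hb.symm)

theorem add_mem_nonprincipal [Add α] [IsRightCancelAdd α] {r : Ultrafilter α}
    (hr : r ∈ nonprincipal α) (q : Ultrafilter α) : r + q ∈ nonprincipal α := by
  intro x
  have hbad : {u | {v | u + v = x} ∈ q}.Subsingleton := fun u₁ h₁ u₂ h₂ => by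
    obtain ⟨v, hv₁, hv₂⟩ := Ultrafilter.nonempty_of_mem (Filter.inter_mem h₁ h₂)
    exact add_right_cancel ((hv₁ : u₁ + v = x).trans (hv₂ : u₂ + v = x).symm)
  change {u | {v | u + v ∈ ({x}ᶜ : Set α)} ∈ q} ∈ r
  refine Filter.mem_of_superset
    (Ultrafilter.compl_mem_iff_notMem.mpr (notMem_of_subsingleton hr hbad)) fun u hu => ?_
  exact Ultrafilter.compl_mem_iff_notMem.mpr hu

end Nonprincipal

theorem IsClosed.exists_minimal_invariant_subset {X : Type*} [TopologicalSpace X]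
    [CompactSpace X] {Y : Set X} (hY : IsClosed Y) {ι : Sort*} (f : ι → X → X) (hne : Y.Nonempty)
    (hinv : ∀ i, ∀ x ∈ Y, f i x ∈ Y) :
    ∃ M ⊆ Y, M.Nonempty ∧ IsClosed M ∧ (∀ i, ∀ x ∈ M, f i x ∈ M) ∧
      ∀ Z ⊆ M, Z.Nonempty → IsClosed Z → (∀ i, ∀ x ∈ Z, f i x ∈ Z) → Z = M := by
  let S : Set (Set X) := {A | A ⊆ Y ∧ A.Nonempty ∧ IsClosed A ∧ ∀ i, ∀ x ∈ A, f i x ∈ A}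
  have hchain : ∀ c ⊆ S, IsChain (· ⊆ ·) c → c.Nonempty → ∃ lb ∈ S, ∀ s ∈ c, lb ⊆ s := by
    intro c hcS hc hcne
    have : Nonempty c := hcne.coe_sort
    refine ⟨⋂₀ c, ⟨?_, ?_, isClosed_sInter fun s hs => (hcS hs).2.2.1, ?_⟩,
      fun s hs => sInter_subset_of_mem hs⟩
    · obtain ⟨t, ht⟩ := hcne
      exact (sInter_subset_of_mem ht).trans (hcS ht).1
    · rw [sInter_eq_iInter]
      exact IsCompact.nonempty_iInter_of_directed_nonempty_isCompact_isClosed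
        (fun i : c => (i : Set X)) (DirectedOn.directed_val (IsChain.directedOn hc.symm))
        (fun i => (hcS i.2).2.1) (fun i => (hcS i.2).2.2.1.isCompact) (fun i => (hcS i.2).2.2.1)
    · exact fun i x hx => mem_sInter.2 fun s hs => (hcS hs).2.2.2 i x (mem_sInter.1 hx s hs)
  obtain ⟨M, -, ⟨hMY, hMne, hMc, hMinv⟩, hMmin⟩ :=
    zorn_superset_nonempty S hchain Y ⟨subset_rfl, hne, hY, hinv⟩
  exact ⟨M, hMY, hMne, hMc, hMinv, fun Z hZM hZne hZc hZinv =>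
    subset_antisymm hZM (hMmin ⟨hZM.trans hMY, hZne, hZc, hZinv⟩ hZM)⟩

section Invariant

variable {α : Type*}

theorem add_mem_of_addInvariant [Add α] {Y : Set (Ultrafilter α)} (hY : IsClosed Y)
    (hinv : addInvariant Y) {q : Ultrafilter α} (hq : q ∈ Y) (r : Ultrafilter α) : r + q ∈ Y :=
  hY.apply_mem_of_pure_mem (Ultrafilter.continuous_add_left q) (fun v _ => hinv v q hq)
    Filter.univ_mem

theorem mul_mem_of_mulInvariant [Mul α] [Zero α] {Y : Set (Ultrafilter α)} (hY : IsClosed Y)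
    (hinv : mulInvariant Y) {q : Ultrafilter α} (hq : q ∈ Y) {r : Ultrafilter α}
    (hr : {u : α | u ≠ 0} ∈ r) : r * q ∈ Y :=
  hY.apply_mem_of_pure_mem (Ultrafilter.continuous_mul_left q) (fun v hv => hinv v hv q hq) hr

def IsMinimalAddInvariant [Add α] (Y : Set (Ultrafilter α)) : Prop :=
  IsClosed Y ∧ addInvariant Y ∧ ∀ Z ⊆ Y, Z.Nonempty → IsClosed Z → addInvariant Z → Z = Y

theorem exists_mem_AMI [AddSemigroup α] {Y : Set (Ultrafilter α)} (hY : IsClosed Y)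
    (hne : Y.Nonempty) (hinv : addInvariant Y) (hY₀ : Y ⊆ nonprincipal α) :
    ∃ p ∈ Y, p ∈ AMI α := by
  obtain ⟨M, hMY, hMne, hMc, hMinv, hMmin⟩ :=
    hY.exists_minimal_invariant_subset (fun v : α => uadd (pure v)) hne hinv
  obtain ⟨p, hpM, hidem⟩ := exists_idempotent_in_compact_add_subsemigroup
    Ultrafilter.continuous_add_left M hMne hMc.isCompact
    fun x _ y hy => add_mem_of_addInvariant hMc hMinv hy x
  exact ⟨p, hMY hpM, mem_nonprincipal_iff.mp (hY₀ (hMY hpM)), hidem, M, hpM, hMc, hMinv, hMmin⟩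

theorem exists_mem_MMI [Semigroup α] [Zero α] {Y : Set (Ultrafilter α)} (hY : IsClosed Y)
    (hne : Y.Nonempty) (hinv : mulInvariant Y) (hY₀ : Y ⊆ nonprincipal α) :
    ∃ p ∈ Y, p ∈ MMI α := by
  obtain ⟨M, hMY, hMne, hMc, hMinv, hMmin⟩ := hY.exists_minimal_invariant_subset
    (fun u : {u : α // u ≠ 0} => umul (pure u.1)) hne fun u => hinv u.1 u.2
  have hM₀ : ∀ q ∈ M, {u : α | u ≠ 0} ∈ q := fun q hq => hY₀ (hMY hq) 0
  have hMinv' : mulInvariant M := fun u hu => hMinv ⟨u, hu⟩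
  obtain ⟨p, hpM, hidem⟩ := exists_idempotent_in_compact_subsemigroup
    Ultrafilter.continuous_mul_left M hMne hMc.isCompact
    fun x hx y hy => mul_mem_of_mulInvariant hMc hMinv' hy (hM₀ x hx)
  exact ⟨p, hMY hpM, mem_nonprincipal_iff.mp (hY₀ (hMY hpM)), hM₀ p hpM, hidem, M, hpM, hMc,
    hM₀, hMinv', fun Z hZ hZne hZc hZinv => hMmin Z hZ hZne hZc fun u => hZinv u.1 u.2⟩

variable [AddSemigroup α]

theorem addInvariant_range_add (q : Ultrafilter α) : addInvariant (range (· + q)) := by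
  rintro w _ ⟨r, rfl⟩
  exact ⟨pure w + r, add_assoc _ _ _⟩

theorem isMinimalAddInvariant_range_add {q : Ultrafilter α}
    (hq : ∀ r, ∃ t, t + (r + q) = q) : IsMinimalAddInvariant (range (· + q)) := by
  refine ⟨(isCompact_range (Ultrafilter.continuous_add_left q)).isClosed,
    addInvariant_range_add q, fun Z hZ ⟨_, hr⟩ hZc hZinv => subset_antisymm hZ ?_⟩
  obtain ⟨r, rfl⟩ := hZ hr
  obtain ⟨t, ht⟩ := hq r
  rintro _ ⟨s, rfl⟩
  change s + q ∈ Z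
  rw [← ht, ← add_assoc]
  exact add_mem_of_addInvariant hZc hZinv hr _

theorem IsMinimalAddInvariant.exists_add_eq {Y : Set (Ultrafilter α)}
    (hY : IsMinimalAddInvariant Y) {p q : Ultrafilter α} (hp : p ∈ Y) (hq : q ∈ Y) :
    ∃ t, t + q = p := by
  have hrange : range (· + q) = Y :=
    hY.2.2 _ (range_subset_iff.2 (add_mem_of_addInvariant hY.1 hY.2.1 hq)) ⟨q + q, q, rfl⟩
      (isCompact_range (Ultrafilter.continuous_add_left q)).isClosed (addInvariant_range_add q)
  rw [← hrange] at hp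
  exact hp

end Invariant

theorem map_mul_left_mem_AMI {R : Type*} [CommRing R] [NoZeroDivisors R] {u : R} (hu : u ≠ 0)
    (hfin : (Ideal.span ({u} : Set R)).toAddSubgroup.FiniteIndex) {p : Ultrafilter R}
    (hp : p ∈ AMI R) : p.map (u * ·) ∈ AMI R := by
  obtain ⟨hnp, hidem, Y, hpY, hY : IsMinimalAddInvariant Y⟩ := hp
  let f : R →+ R := AddMonoidHom.mulLeft u
  have hrange : range f = (Ideal.span ({u} : Set R)).toAddSubgroup := by
    ext x
    simp [f, Ideal.mem_span_singleton', mul_comm]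
  have hidem' : p.map f + p.map f = p.map f := by
    rw [← Ultrafilter.map_add]
    exact congrArg _ hidem
  refine ⟨mem_nonprincipal_iff.mp (map_mem_nonprincipal (mul_right_injective₀ hu)
    (mem_nonprincipal_iff.mpr hnp)), hidem', range (· + p.map f), ⟨p.map f, hidem'⟩,
    isMinimalAddInvariant_range_add fun r => ?_⟩
  obtain ⟨v, s, hs, rfl⟩ := Ultrafilter.exists_eq_pure_add_of_finiteIndex
    (Ideal.span ({u} : Set R)).toAddSubgroup r
  obtain ⟨s₀, rfl⟩ := Ultrafilter.exists_map_eq_of_range_mem (hrange ▸ hs)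
  obtain ⟨t, ht⟩ := hY.exists_add_eq hpY (add_mem_of_addInvariant hY.1 hY.2.1 hpY s₀)
  -- `r + p.map f = pure v + (s₀ + p).map f`, and `t` brings `s₀ + p` back to `p` inside `Y`.
  refine ⟨t.map f + pure (-v), ?_⟩
  calc t.map f + pure (-v) + (pure v + s₀.map f + p.map f)
      = t.map f + (pure (-v) + (pure v + (s₀ + p).map f)) := by
        simp only [Ultrafilter.map_add, add_assoc]
    _ = (t + (s₀ + p)).map f := by
        simp only [Ultrafilter.pure_neg_add_pure_add, Ultrafilter.map_add]
    _ = p.map f := by rw [ht]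

theorem IsLID.mulInvariant_closure_AMI {R : Type*} [CommRing R] [NoZeroDivisors R]
    (hR : IsLID R) : mulInvariant (closure (AMI R)) := fun u hu _ hq =>
  map_mem_closure (Ultrafilter.continuous_map _) hq fun _ hp =>
    map_mul_left_mem_AMI hu (hR u hu) hp

section AffinePreimages

variable {R : Type*} [Semiring R]

def affinePreimageUltrafilters (T : Set R) : Set (Ultrafilter R) :=
  {p | ∀ u v : R, u ≠ 0 → {x | u * x + v ∈ T} ∈ p}

theorem isClosed_affinePreimageUltrafilters (T : Set R) :
    IsClosed (affinePreimageUltrafilters T) := by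
  simp only [affinePreimageUltrafilters, ofPred_forall]
  exact isClosed_iInter fun u => isClosed_iInter fun v => isClosed_iInter fun _ =>
    ultrafilter_isClosed_basic _

theorem AffThick.affinePreimageUltrafilters_nonempty {T : Set R} (hT : AffThick T) :
    (affinePreimageUltrafilters T).Nonempty := by
  obtain ⟨p, -, hp⟩ := isCompact_univ.inter_iInter_nonempty
    (fun g : {g : R × R // g.1 ≠ 0} => {p : Ultrafilter R | {x | g.1.1 * x + g.1.2 ∈ T} ∈ p})
    (fun _ => ultrafilter_isClosed_basic _) fun F => by
      obtain ⟨x, hx⟩ := hT (F.map (Function.Embedding.subtype _)) (by simp +contextual)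
      exact ⟨pure x, trivial, mem_iInter₂.2 fun g hg => hx g.1 (Finset.mem_map_of_mem _ hg)⟩
  exact ⟨p, fun u v hu => mem_iInter.1 hp ⟨(u, v), hu⟩⟩

theorem mem_of_mem_affinePreimageUltrafilters [Nontrivial R] {T : Set R} {p : Ultrafilter R}
    (hp : p ∈ affinePreimageUltrafilters T) : T ∈ p := by
  simpa using hp 1 0 one_ne_zero

theorem addInvariant_affinePreimageUltrafilters (T : Set R) :
    addInvariant (affinePreimageUltrafilters T) := by
  intro w q hq u v hu
  have h : ∀ x, u * (w + x) + v = u * x + (u * w + v) := fun x => by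
    rw [mul_add, add_assoc, add_left_comm]
  change {x | u * (w + x) + v ∈ T} ∈ q
  simpa only [h] using hq u (u * w + v) hu

theorem mulInvariant_affinePreimageUltrafilters [NoZeroDivisors R] (T : Set R) :
    mulInvariant (affinePreimageUltrafilters T) := by
  intro w hw q hq u v hu
  change {x | u * (w * x) + v ∈ T} ∈ q
  simpa only [mul_assoc] using hq (u * w) v (mul_ne_zero hu hw)

end AffinePreimages

theorem stmt13_general {R : Type*} [CommRing R] [IsDomain R] [Infinite R]
    (hLID : IsLID R) (T : Set R) (hT : AffThick T) :
    ∃ p ∈ dcG R, T ∈ p := by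
  set A := affinePreimageUltrafilters T ∩ nonprincipal R
  have hAc : IsClosed A :=
    (isClosed_affinePreimageUltrafilters T).inter isClosed_nonprincipal
  obtain ⟨p₀, hp₀⟩ := hT.affinePreimageUltrafilters_nonempty
  have hA : A.Nonempty := ⟨hyperfilter R + p₀,
    add_mem_of_addInvariant (isClosed_affinePreimageUltrafilters T)
      (addInvariant_affinePreimageUltrafilters T) hp₀ _,
    add_mem_nonprincipal hyperfilter_mem_nonprincipal p₀⟩
  have hAadd : addInvariant A := fun v q hq =>
    ⟨addInvariant_affinePreimageUltrafilters T v q hq.1,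
      map_mem_nonprincipal (add_right_injective v) hq.2⟩
  obtain ⟨p₁, hp₁A, hp₁⟩ := exists_mem_AMI hAc hA hAadd inter_subset_right
  have hWmul : mulInvariant (closure (AMI R) ∩ A) := fun u hu q hq =>
    ⟨hLID.mulInvariant_closure_AMI u hu q hq.1,
      mulInvariant_affinePreimageUltrafilters T u hu q hq.2.1,
      map_mem_nonprincipal (mul_right_injective₀ hu) hq.2.2⟩
  obtain ⟨p, ⟨hpAMI, hpT, -⟩, hp⟩ := exists_mem_MMI (isClosed_closure.inter hAc)
    ⟨p₁, subset_closure hp₁, hp₁A⟩ hWmul (inter_subset_right.trans inter_subset_right)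
  exact ⟨p, ⟨hpAMI, hp⟩, mem_of_mem_affinePreimageUltrafilters hpT⟩

/-- In a LID `R`, every affinely thick set `T` is DC: some ultrafilter
`p ∈ 𝒢` contains `T`. -/
theorem stmt13 {R : Type*} [CommRing R] [IsDomain R] [Countable R] [Infinite R]
    (hLID : IsLID R) (T : Set R) (hT : AffThick T) :
    ∃ p ∈ dcG R, T ∈ p :=
  stmt13_general hLID T hT
end

section
/- Let R be a LID, let H be a complex Hilbert space, and let (A_v)_{v∈R}, (M_u)_{u∈R∖{0}} be an isometric anti-representation of the affine semigroup of R on H. Then the orthogonal projections V_A and V_M commute: V_A(V_M φ) = V_M(V_A φ) for every φ ∈ H. -/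
/-- A vector is additively compact when its orbit under the additive part of the
anti-representation is precompact in the norm topology. -/
def addOrbitCompact {R H : Type*} [NormedAddCommGroup H] [InnerProductSpace ℂ H]
    (A : R → H →ₗᵢ[ℂ] H) (φ : H) : Prop :=
  IsCompact (closure (Set.range fun v : R => A v φ))

/-- A vector is multiplicatively compact when its orbit under the multiplicative part
(over nonzero indices) of the anti-representation is precompact in the norm topology. -/
def mulOrbitCompact {R H : Type*} [Zero R] [NormedAddCommGroup H] [InnerProductSpace ℂ H]
    (M : R → H →ₗᵢ[ℂ] H) (φ : H) : Prop :=
  IsCompact (closure (Set.range fun u : {u : R // u ≠ (0 : R)} => M u.1 φ))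

/-!
`V_A` commutes with every `M_u`: the isometry `M_u` maps additively compact vectors to additively
compact ones, and it also preserves their orthogonal complement, because the adjoint `M_u*` maps
additively compact vectors to additively compact ones. Indeed `M_u* A_w = A_{wu} M_u*`, so the
`A`-orbit of `M_u* ψ` over the ideal `uR` is a continuous image of the `A`-orbit of `ψ`, and since
`uR` has finite index (the LID property) the whole orbit is a finite union of translates of it.
Consequently `V_A` maps multiplicatively compact vectors to multiplicatively compact ones; being
self-adjoint it also preserves their orthogonal complement, hence commutes with `V_M`.
-/

open Set

section CompactClosure

variable {X : Type*} [TopologicalSpace X] [R1Space X]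

theorem isCompact_closure_of_subset_image {Y : Type*} [TopologicalSpace Y] {f : Y → X}
    (hf : Continuous f) {s : Set X} {t : Set Y} (ht : IsCompact (closure t)) (hst : s ⊆ f '' t) :
    IsCompact (closure s) :=
  (ht.image hf).closure_of_subset (hst.trans (image_mono subset_closure))

theorem isCompact_closure_range_sub {ι E F : Type*} [TopologicalSpace E] [AddGroup E]
    [IsTopologicalAddGroup E] [R1Space E] [FunLike F E E] [AddMonoidHomClass F E E] (f : ι → F)
    {x y : E} (hx : IsCompact (closure (range fun i => f i x)))
    (hy : IsCompact (closure (range fun i => f i y))) :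
    IsCompact (closure (range fun i => f i (x - y))) := by
  have hxy : IsCompact (closure ((range fun i => f i x) ×ˢ (range fun i => f i y))) := by
    rw [closure_prod_eq]
    exact hx.prod hy
  refine isCompact_closure_of_subset_image continuous_sub hxy ?_
  rintro _ ⟨i, rfl⟩
  exact ⟨(f i x, f i y), ⟨⟨i, rfl⟩, ⟨i, rfl⟩⟩, (map_sub (f i) x y).symm⟩

theorem isCompact_closure_range_of_finiteIndex {G : Type*} [AddGroup G] (A : G → X → X)
    (hA : ∀ v w x, A v (A w x) = A (v + w) x) (hcont : ∀ v, Continuous (A v))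
    (S : AddSubgroup G) [S.FiniteIndex] {x : X}
    (hS : IsCompact (closure (range fun s : S => A s x))) :
    IsCompact (closure (range fun v => A v x)) := by
  refine (isCompact_iUnion fun c : G ⧸ S => hS.image (hcont c.out)).closure_of_subset ?_
  rintro _ ⟨w, rfl⟩
  obtain ⟨s, hs⟩ := QuotientAddGroup.mk_out_eq_add S w
  refine mem_iUnion.2 ⟨w, A (-s : S) x, subset_closure ⟨-s, rfl⟩, ?_⟩
  rw [hA, hs, NegMemClass.coe_neg, add_neg_cancel_right]

end CompactClosure

section OrthogonalProjection

variable {𝕜 E : Type*} [RCLike 𝕜] [NormedAddCommGroup E] [InnerProductSpace 𝕜 E]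

def IsOrthogonalProjectionOnto (V : E →L[𝕜] E) (K : Set E) : Prop :=
  (∀ x, V x ∈ K) ∧ ∀ x, ∀ ψ ∈ K, inner 𝕜 (x - V x) ψ = 0

namespace IsOrthogonalProjectionOnto

variable {V : E →L[𝕜] E} {K : Set E}

theorem eq_of_inner_sub_eq_zero (hV : IsOrthogonalProjectionOnto V K)
    (hK : ∀ a ∈ K, ∀ b ∈ K, a - b ∈ K) {x y : E} (hy : y ∈ K)
    (hxy : ∀ ψ ∈ K, inner 𝕜 (x - y) ψ = 0) : V x = y := by
  have hd : V x - y ∈ K := hK _ (hV.1 x) _ hy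
  have h : inner 𝕜 (V x - y) (V x - y) = 0 := by
    calc inner 𝕜 (V x - y) (V x - y) = inner 𝕜 ((x - y) - (x - V x)) (V x - y) := by
          rw [sub_sub_sub_cancel_left]
      _ = 0 := by rw [inner_sub_left, hxy _ hd, hV.2 x _ hd, sub_zero]
  exact sub_eq_zero.1 (inner_self_eq_zero.1 h)

theorem isSymmetric (hV : IsOrthogonalProjectionOnto V K) : (V : E →ₗ[𝕜] E).IsSymmetric := by
  intro x y
  have h1 : inner 𝕜 (V x) (y - V y) = 0 := by
    rw [← inner_conj_symm, hV.2 y _ (hV.1 x), map_zero]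
  have h2 : inner 𝕜 (x - V x) (V y) = 0 := hV.2 x _ (hV.1 y)
  rw [inner_sub_right, sub_eq_zero] at h1
  rw [inner_sub_left, sub_eq_zero] at h2
  exact h1.trans h2.symm

theorem inner_map_eq_zero_of_mapsTo (hV : IsOrthogonalProjectionOnto V K) {L : Set E}
    (hL : MapsTo V L L) {x : E} (hx : ∀ ψ ∈ L, inner 𝕜 x ψ = 0) :
    ∀ ψ ∈ L, inner 𝕜 (V x) ψ = 0 :=
  fun ψ hψ => (hV.isSymmetric x ψ).trans (hx _ (hL hψ))

theorem map_apply_eq_apply_map (hV : IsOrthogonalProjectionOnto V K)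
    (hK : ∀ a ∈ K, ∀ b ∈ K, a - b ∈ K) {F : Type*} [FunLike F E E] [AddMonoidHomClass F E E]
    (T : F) (hTK : MapsTo T K K)
    (hTperp : ∀ x, (∀ ψ ∈ K, inner 𝕜 x ψ = 0) → ∀ ψ ∈ K, inner 𝕜 (T x) ψ = 0) (x : E) :
    V (T x) = T (V x) :=
  hV.eq_of_inner_sub_eq_zero hK (hTK (hV.1 x)) (by rw [← map_sub]; exact hTperp _ (hV.2 x))

end IsOrthogonalProjectionOnto

end OrthogonalProjection

section IsometricRepresentation

variable {𝕜 E : Type*} [RCLike 𝕜] [NormedAddCommGroup E] [InnerProductSpace 𝕜 E]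

theorem apply_apply_neg {G : Type*} [AddGroup G] {A : G → E →ₗᵢ[𝕜] E}
    (hA : ∀ v w x, A v (A w x) = A (v + w) x) (v : G) (x : E) : A v (A (-v) x) = x := by
  have h0 : ∀ y, A 0 y = y := fun y => (A 0).injective (by rw [hA, add_zero])
  rw [hA, add_neg_cancel, h0]

theorem inner_apply_neg_left {G : Type*} [AddGroup G] {A : G → E →ₗᵢ[𝕜] E}
    (hA : ∀ v w x, A v (A w x) = A (v + w) x) (v : G) (x y : E) :
    inner 𝕜 (A (-v) x) y = inner 𝕜 x (A v y) := by
  rw [← (A v).inner_map_map, apply_apply_neg hA]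

open ContinuousLinearMap in
theorem adjoint_apply_apply_eq_apply_mul {R : Type*} [Ring R] [CompleteSpace E]
    {A : R → E →ₗᵢ[𝕜] E} (hA : ∀ v w x, A v (A w x) = A (v + w) x) {u : R} {T : E →L[𝕜] E}
    (hT : ∀ v x, A v (T x) = T (A (v * u) x)) (w : R) (ψ : E) :
    adjoint T (A w ψ) = A (w * u) (adjoint T ψ) :=
  ext_inner_left 𝕜 fun z => by
    rw [adjoint_inner_right, ← inner_apply_neg_left hA, hT, ← adjoint_inner_right, neg_mul,
      inner_apply_neg_left hA]

end IsometricRepresentation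

section AddOrbitCompact

variable {R H : Type*} [CommRing R] [NormedAddCommGroup H] [InnerProductSpace ℂ H]
  {A : R → H →ₗᵢ[ℂ] H}

theorem addOrbitCompact_map {u : R} {T : H →L[ℂ] H} (hT : ∀ v x, A v (T x) = T (A (v * u) x))
    {x : H} (hx : addOrbitCompact A x) : addOrbitCompact A (T x) :=
  isCompact_closure_of_subset_image T.continuous hx <| by
    rintro _ ⟨v, rfl⟩
    exact ⟨A (v * u) x, ⟨v * u, rfl⟩, (hT v x).symm⟩

open ContinuousLinearMap in
theorem addOrbitCompact_adjoint [CompleteSpace H] (hLID : IsLID R)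
    (hA : ∀ v w x, A v (A w x) = A (v + w) x) {u : R} (hu : u ≠ 0) {T : H →L[ℂ] H}
    (hT : ∀ v x, A v (T x) = T (A (v * u) x)) {ψ : H} (hψ : addOrbitCompact A ψ) :
    addOrbitCompact A (adjoint T ψ) := by
  have := hLID u hu
  refine isCompact_closure_range_of_finiteIndex (fun v => A v) hA (fun v => (A v).continuous)
    (Ideal.span {u}).toAddSubgroup
    (isCompact_closure_of_subset_image (adjoint T).continuous hψ ?_)
  rintro _ ⟨⟨s, hs⟩, rfl⟩
  obtain ⟨t, rfl⟩ := Ideal.mem_span_singleton'.1 hs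
  exact ⟨A t ψ, ⟨t, rfl⟩, adjoint_apply_apply_eq_apply_mul hA hT t ψ⟩

theorem inner_map_eq_zero_of_orthogonal_addOrbitCompact [CompleteSpace H] (hLID : IsLID R)
    (hA : ∀ v w x, A v (A w x) = A (v + w) x) {u : R} (hu : u ≠ 0) {T : H →L[ℂ] H}
    (hT : ∀ v x, A v (T x) = T (A (v * u) x)) {x : H}
    (hx : ∀ ψ, addOrbitCompact A ψ → inner ℂ x ψ = 0) {ψ : H} (hψ : addOrbitCompact A ψ) :
    inner ℂ (T x) ψ = 0 := by
  rw [← ContinuousLinearMap.adjoint_inner_right]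
  exact hx _ (addOrbitCompact_adjoint hLID hA hu hT hψ)

end AddOrbitCompact

theorem stmt14_general {R : Type*} [CommRing R]
    (hLID : IsLID R)
    {H : Type*} [NormedAddCommGroup H] [InnerProductSpace ℂ H] [CompleteSpace H]
    (A M : R → H →ₗᵢ[ℂ] H)
    (hAadd : ∀ (v w : R) (φ : H), A v (A w φ) = A (v + w) φ)
    (hAM : ∀ (v u : R), u ≠ 0 → ∀ φ : H, A v (M u φ) = M u (A (v * u) φ))
    (VA VM : H →L[ℂ] H)
    (hVAmem : ∀ φ : H, addOrbitCompact A (VA φ))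
    (hVAorth : ∀ φ ψ : H, addOrbitCompact A ψ → (inner ℂ (φ - VA φ) ψ : ℂ) = 0)
    (hVMmem : ∀ φ : H, mulOrbitCompact M (VM φ))
    (hVMorth : ∀ φ ψ : H, mulOrbitCompact M ψ → (inner ℂ (φ - VM φ) ψ : ℂ) = 0)
    (φ : H) :
    VA (VM φ) = VM (VA φ) := by
  have hPA : IsOrthogonalProjectionOnto VA {ψ | addOrbitCompact A ψ} := ⟨hVAmem, hVAorth⟩
  have hPM : IsOrthogonalProjectionOnto VM {ψ | mulOrbitCompact M ψ} := ⟨hVMmem, hVMorth⟩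
  have hVAM (u : R) (hu : u ≠ 0) (x : H) : VA (M u x) = M u (VA x) :=
    hPA.map_apply_eq_apply_map (fun _ ha _ hb => isCompact_closure_range_sub A ha hb) (M u)
      (fun _ => addOrbitCompact_map (T := (M u).toContinuousLinearMap) (hAM · u hu ·))
      (fun _ hy _ => inner_map_eq_zero_of_orthogonal_addOrbitCompact hLID hAadd hu
        (T := (M u).toContinuousLinearMap) (hAM · u hu ·) hy) x
  have hVAKM : MapsTo VA {ψ | mulOrbitCompact M ψ} {ψ | mulOrbitCompact M ψ} :=
    fun x hx => isCompact_closure_of_subset_image VA.continuous hx <| by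
      rintro _ ⟨u, rfl⟩
      exact ⟨M u.1 x, ⟨u, rfl⟩, hVAM u.1 u.2 x⟩
  exact (hPM.map_apply_eq_apply_map
    (fun _ ha _ hb => isCompact_closure_range_sub (fun u : {u : R // u ≠ 0} => M u.1) ha hb) VA
    hVAKM (fun _ => hPA.inner_map_eq_zero_of_mapsTo hVAKM) φ).symm

/-- For an isometric anti-representation of the affine semigroup of a LID `R`
on a complex Hilbert space `H`, the orthogonal projections `V_A` (onto the additively compact
vectors) and `V_M` (onto the multiplicatively compact vectors) commute. -/
theorem stmt14 {R : Type*} [CommRing R] [IsDomain R] [Countable R] [Infinite R]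
    (hLID : IsLID R)
    {H : Type*} [NormedAddCommGroup H] [InnerProductSpace ℂ H] [CompleteSpace H]
    (A M : R → H →ₗᵢ[ℂ] H)
    (hAadd : ∀ (v w : R) (φ : H), A v (A w φ) = A (v + w) φ)
    (hMmul : ∀ (u w : R), u ≠ 0 → w ≠ 0 → ∀ φ : H, M u (M w φ) = M (u * w) φ)
    (hAM : ∀ (v u : R), u ≠ 0 → ∀ φ : H, A v (M u φ) = M u (A (v * u) φ))
    (VA VM : H →L[ℂ] H)
    (hVAmem : ∀ φ : H, addOrbitCompact A (VA φ))
    (hVAorth : ∀ φ ψ : H, addOrbitCompact A ψ → (inner ℂ (φ - VA φ) ψ : ℂ) = 0)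
    (hVMmem : ∀ φ : H, mulOrbitCompact M (VM φ))
    (hVMorth : ∀ φ ψ : H, mulOrbitCompact M ψ → (inner ℂ (φ - VM φ) ψ : ℂ) = 0)
    (φ : H) :
    VA (VM φ) = VM (VA φ) :=
  stmt14_general hLID A M hAadd hAM VA VM hVAmem hVAorth hVMmem hVMorth φ
end

section
/- Let R be a LID, let H be a complex Hilbert space, let (A_v)_{v∈R}, (M_u)_{u∈R∖{0}} be an isometric anti-representation of the affine semigroup of R on H, and let φ ∈ H be additively compact, i.e. the orbit {A_v φ : v ∈ R} is precompact in the norm topology. Then for every ε > 0 the set {u ∈ R : ‖A_u φ − φ‖ < ε} is DC*, i.e. it belongs to every ultrafilter p ∈ 𝒢; equivalently, p-lim_u ‖A_u φ − φ‖ = 0 for every p ∈ 𝒢. -/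
open Filter

/-!
Let `p` be an additive idempotent and `ψ` the `p`-limit of the orbit `v ↦ A_v φ`, which exists by
compactness. Idempotence `p + p = p` turns `p-lim_v A_{u+v} φ = ψ` into `p-lim_u A_u ψ = ψ`, so `ψ`
is `p`-recurrent. Since the `A_u` are commuting isometries, `‖A_u φ - φ‖ = ‖A_u A_v φ - A_v φ‖`,
which is within `2 ‖A_v φ - ψ‖` of `‖A_u ψ - ψ‖`; so `φ` is `p`-recurrent too. The sets
`{p | E ∈ p}` are closed in `βR`, so recurrence along every additive minimal idempotent passes to
the closure of `AMI`, which contains `𝒢`.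
-/

lemma mem_uadd_iff {R : Type*} [Add R] (p q : Ultrafilter R) (E : Set R) :
    E ∈ uadd p q ↔ {u | {v | u + v ∈ E} ∈ q} ∈ p :=
  Iff.rfl

section IsometricAction

variable {R X : Type*} [AddCommSemigroup R] [PseudoMetricSpace X]
  {T : R → X → X} (hT : ∀ v, Isometry (T v)) (hTadd : ∀ v w x, T v (T w x) = T (v + w) x)
include hT hTadd

lemma dist_act_act_self (u v : R) (x : X) : dist (T u (T v x)) (T v x) = dist (T u x) x := by
  rw [hTadd, add_comm, ← hTadd, (hT v).dist_eq]

lemma eventually_dist_act_lt_of_tendsto {p : Ultrafilter R} (hp : uadd p p = p) {x ψ : X}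
    (hψ : Tendsto (fun v => T v x) p (nhds ψ)) {δ : ℝ} (hδ : 0 < δ) :
    ∀ᶠ u in (p : Filter R), dist (T u ψ) ψ < δ := by
  have hnear : {w | dist (T w x) ψ < δ / 2} ∈ p :=
    hψ (Metric.ball_mem_nhds ψ (half_pos hδ))
  have hshift : {u | {v | dist (T (u + v) x) ψ < δ / 2} ∈ p} ∈ p := by
    rw [← hp] at hnear
    exact (mem_uadd_iff p p _).mp hnear
  filter_upwards [hshift] with u hu
  obtain ⟨v, hv, hv'⟩ := Filter.nonempty_of_mem (inter_mem hu hnear)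
  calc dist (T u ψ) ψ ≤ dist (T u ψ) (T u (T v x)) + dist (T u (T v x)) ψ := dist_triangle _ _ _
    _ = dist (T v x) ψ + dist (T (u + v) x) ψ := by rw [(hT u).dist_eq, dist_comm, hTadd]
    _ < δ / 2 + δ / 2 := add_lt_add hv' hv
    _ = δ := add_halves δ

lemma eventually_dist_act_self_lt {x : X} (hx : IsCompact (closure (Set.range fun v => T v x)))
    {p : Ultrafilter R} (hp : uadd p p = p) {ε : ℝ} (hε : 0 < ε) :
    ∀ᶠ u in (p : Filter R), dist (T u x) x < ε := by
  obtain ⟨ψ, hψK, hψ⟩ := hx.ultrafilter_le_nhds (p.map fun v => T v x) <|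
    le_principal_iff.mpr <| mem_map.mpr <| univ_mem' fun v => subset_closure ⟨v, rfl⟩
  obtain ⟨_, ⟨v, rfl⟩, hv⟩ := Metric.mem_closure_iff.mp hψK (ε / 4) (by positivity)
  rw [dist_comm] at hv
  filter_upwards [eventually_dist_act_lt_of_tendsto hT hTadd hp hψ (half_pos hε)] with u hu
  calc dist (T u x) x = dist (T u (T v x)) (T v x) := (dist_act_act_self hT hTadd u v x).symm
    _ ≤ dist (T u (T v x)) (T u ψ) + dist (T u ψ) ψ + dist ψ (T v x) := dist_triangle4 _ _ _ _
    _ = dist (T v x) ψ + dist (T u ψ) ψ + dist (T v x) ψ := by rw [(hT u).dist_eq, dist_comm ψ]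
    _ < ε / 4 + ε / 2 + ε / 4 := by gcongr
    _ = ε := by ring

end IsometricAction

theorem stmt15_general {R : Type*} [CommRing R]
    {H : Type*} [NormedAddCommGroup H] [InnerProductSpace ℂ H]
    (A : R → H →ₗᵢ[ℂ] H)
    (hAadd : ∀ (v w : R) (φ : H), A v (A w φ) = A (v + w) φ)
    (φ : H) (hφ : addOrbitCompact A φ) :
    (∀ ε : ℝ, 0 < ε → ∀ p ∈ dcG R, {u : R | ‖A u φ - φ‖ < ε} ∈ p) ∧
      (∀ p ∈ dcG R, Filter.Tendsto (fun u : R => ‖A u φ - φ‖) ↑p (nhds 0)) := by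
  have hDC : ∀ ε : ℝ, 0 < ε → ∀ p ∈ dcG R, {u : R | ‖A u φ - φ‖ < ε} ∈ p := by
    intro ε hε p hp
    have hAMI : AMI R ⊆ {q | {u : R | ‖A u φ - φ‖ < ε} ∈ q} := fun q hq => by
      have h := eventually_dist_act_self_lt (fun v => (A v).isometry) hAadd hφ hq.2.1 hε
      simp only [dist_eq_norm] at h
      exact h
    exact closure_minimal hAMI (ultrafilter_isClosed_basic _) hp.1
  refine ⟨hDC, fun p hp => Metric.tendsto_nhds.mpr fun ε hε => ?_⟩
  filter_upwards [hDC ε hε p hp] with u hu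
  rwa [Real.dist_0_eq_abs, abs_norm]

/-- If `φ` is additively compact for an isometric anti-representation of the
affine semigroup of a LID `R` on a complex Hilbert space `H`, then for every `ε > 0` the set
`{u ∈ R : ‖A_u φ − φ‖ < ε}` belongs to every ultrafilter `p ∈ 𝒢` (i.e. it is DC*);
equivalently `p`-lim of `‖A_u φ − φ‖` is `0` for every `p ∈ 𝒢`. -/
theorem stmt15 {R : Type*} [CommRing R] [IsDomain R] [Countable R] [Infinite R]
    (hLID : IsLID R)
    {H : Type*} [NormedAddCommGroup H] [InnerProductSpace ℂ H] [CompleteSpace H]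
    (A M : R → H →ₗᵢ[ℂ] H)
    (hAadd : ∀ (v w : R) (φ : H), A v (A w φ) = A (v + w) φ)
    (hMmul : ∀ (u w : R), u ≠ 0 → w ≠ 0 → ∀ φ : H, M u (M w φ) = M (u * w) φ)
    (hAM : ∀ (v u : R), u ≠ 0 → ∀ φ : H, A v (M u φ) = M u (A (v * u) φ))
    (φ : H) (hφ : addOrbitCompact A φ) :
    (∀ ε : ℝ, 0 < ε → ∀ p ∈ dcG R, {u : R | ‖A u φ - φ‖ < ε} ∈ p) ∧
      (∀ p ∈ dcG R, Filter.Tendsto (fun u : R => ‖A u φ - φ‖) ↑p (nhds 0)) :=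
  stmt15_general A hAadd φ hφ
end

section
/- Let R be an infinite countable integral domain and let S ⊆ R∖{0} be multiplicatively syndetic, i.e. there is a finite set F ⊆ R∖{0} such that for every x ∈ R∖{0} there exists n ∈ F with n·x ∈ S. Then there exist nonzero elements x, y ∈ R with x + y ∈ S and x·y ∈ S. -/
/-!
Fix a word length and realise every word `w` over the alphabet `A = {0} ∪ F` as the element
`E₀ + ∑ᵢ wᵢ Eᵢ` of `R`, where the `E`'s are chosen (using that `R` is an infinite domain) so that
no nontrivial combination of them with coefficients in `A ∪ {1}` vanishes. Every such element is
nonzero and each combinatorial line becomes an affine family `a ↦ a e + u` with `e ≠ 0`. Colouring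
a word by a multiplier `m ∈ F` sending its element into `S`, Hales–Jewett gives `m ∈ F` with
`m (a e + u) ∈ S` for all `a ∈ A`. Then `y = m u ∈ S`, some `q ∈ F` sends `(m e) y` into `S`, and
`x = q m e` works: `x + y = m (q e + u)` and `x y = q (m e) y`.
-/

section

open Finset Combinatorics

variable {R : Type*} [CommRing R] [IsDomain R]

def CoeffIndependent {ι : Type*} [Fintype ι] (A : Finset R) (E : ι → R) : Prop :=
  ∀ c : ι → R, (∀ i, c i ∈ A) → ∑ i, c i * E i = 0 → c = 0

lemma CoeffIndependent.exists_option {ι : Type*} [Fintype ι] {A : Finset R} {E : ι → R}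
    [Infinite R] (hE : CoeffIndependent A E) :
    ∃ x : R, CoeffIndependent A (fun o : Option ι => o.elim x E) := by
  set bad : Set R :=
    ⋃ a ∈ (A : Set R), ⋃ c : ι → A, {x | a ≠ 0 ∧ a * x + ∑ i, (c i : R) * E i = 0}
  have hbad : bad.Finite := by
    refine A.finite_toSet.biUnion fun a _ => Set.finite_iUnion fun c => ?_
    refine Set.Subsingleton.finite ?_
    rintro x ⟨ha, hx⟩ y ⟨-, hy⟩
    exact mul_left_cancel₀ ha (by linear_combination hx - hy)
  obtain ⟨x, hx⟩ := hbad.infinite_compl.nonempty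
  refine ⟨x, fun c hc hsum => ?_⟩
  rw [Fintype.sum_option] at hsum
  have hnone : c none = 0 := by
    by_contra hne
    exact hx <| Set.mem_biUnion (hc none) <|
      Set.mem_iUnion.2 ⟨fun i => ⟨c (some i), hc _⟩, hne, hsum⟩
  rw [hnone, zero_mul, zero_add] at hsum
  have hsome := hE (fun i => c (some i)) (fun i => hc _) hsum
  funext o
  cases o with
  | none => exact hnone
  | some i => exact congrFun hsome i

lemma exists_coeffIndependent [Infinite R] (A : Finset R) (ι : Type*) [Fintype ι] :
    ∃ E : ι → R, CoeffIndependent A E := by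
  refine Fintype.induction_empty_option (P := fun ι _ => ∃ E : ι → R, CoeffIndependent A E)
    ?_ ?_ ?_ ι
  · intro α β _ e ⟨E, hE⟩
    let _ : Fintype α := Fintype.ofEquiv β e.symm
    refine ⟨E ∘ e.symm, fun c hc hsum => ?_⟩
    have := hE (c ∘ e) (fun a => hc _) <| by
      rw [← hsum]
      exact Fintype.sum_equiv e _ _ fun a => by simp
    funext b
    simpa using congrFun this (e.symm b)
  · exact ⟨PEmpty.elim, fun c _ _ => funext fun x => x.elim⟩
  · intro α _ ⟨E, hE⟩
    exact ⟨_, hE.exists_option.choose_spec⟩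

lemma exists_nonzero_affine_on_lines [Infinite R] (A : Finset R) (ι : Type*) [Fintype ι] :
    ∃ f : (ι → A) → R, (∀ w, f w ≠ 0) ∧
      ∀ l : Line A ι, ∃ e u : R, e ≠ 0 ∧ ∀ x : A, f (l x) = x * e + u := by
  classical
  obtain ⟨E, hE⟩ := exists_coeffIndependent (insert 0 (insert 1 A)) (Option ι)
  have mem_of_mem {a : R} (ha : a ∈ A) : a ∈ insert 0 (insert 1 A) :=
    mem_insert_of_mem (mem_insert_of_mem ha)
  have one_mem : (1 : R) ∈ insert 0 (insert 1 A) := mem_insert_of_mem (mem_insert_self _ _)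
  have zero_mem : (0 : R) ∈ insert 0 (insert 1 A) := mem_insert_self _ _
  refine ⟨fun w => E none + ∑ i, (w i : R) * E (some i), fun w hw => ?_, fun l => ?_⟩
  · have := hE (Option.elim · 1 (fun i => (w i : R)))
      (fun o => by cases o <;> simp [one_mem, mem_of_mem]) (by simpa [Fintype.sum_option])
    exact one_ne_zero (congrFun this none)
  · let δ : ι → R := fun i => if l.idxFun i = none then 1 else 0
    refine ⟨∑ i, δ i * E (some i),
      E none + ∑ i, ((l.idxFun i).elim 0 (fun a => (a : R))) * E (some i), fun he => ?_,
      fun x => ?_⟩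
    · have := hE (Option.elim · 0 δ)
        (fun o => by cases o <;> simp [δ, apply_ite, zero_mem, one_mem])
        (by simpa [Fintype.sum_option])
      obtain ⟨i, hi⟩ := l.proper
      simpa [δ, hi] using congrFun this (some i)
    · have hsplit (i : ι) : (l x i : R) = x * δ i + (l.idxFun i).elim 0 (fun a => (a : R)) := by
        cases h : l.idxFun i <;> simp [δ, h]
      simp only [hsplit, add_mul, sum_add_distrib, mul_sum, mul_assoc]
      ring

lemma exists_affine_mul_mem_of_syndetic [Infinite R] {S : Set R} {F : Finset R}
    (hF : ∀ x : R, x ≠ 0 → ∃ n ∈ F, n * x ∈ S) (A : Finset R) :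
    ∃ m ∈ F, ∃ e u : R, e ≠ 0 ∧ ∀ a ∈ A, m * (a * e + u) ∈ S := by
  choose g hgF hgS using hF
  obtain ⟨ι, _, hHJ⟩ := Line.exists_mono_in_high_dimension A F
  obtain ⟨f, hf0, hfl⟩ := exists_nonzero_affine_on_lines A ι
  obtain ⟨l, m, hm⟩ := hHJ fun w => ⟨g (f w) (hf0 w), hgF _ _⟩
  obtain ⟨e, u, he, hlin⟩ := hfl l
  refine ⟨m, m.2, e, u, he, fun a ha => ?_⟩
  have hcol : g (f (l ⟨a, ha⟩)) (hf0 _) = m := congrArg Subtype.val (hm ⟨a, ha⟩)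
  have := hgS _ (hf0 (l ⟨a, ha⟩))
  rwa [hcol, hlin] at this

end

theorem stmt16_general {R : Type*} [CommRing R] [IsDomain R] [Infinite R]
    (S : Set R) (hS0 : ∀ s ∈ S, s ≠ 0)
    (F : Finset R) (hF0 : ∀ n ∈ F, n ≠ 0)
    (hF : ∀ x : R, x ≠ 0 → ∃ n ∈ F, n * x ∈ S) :
    ∃ x y : R, x ≠ 0 ∧ y ≠ 0 ∧ x + y ∈ S ∧ x * y ∈ S := by
  classical
  obtain ⟨m, hm, e, u, he, hS⟩ := exists_affine_mul_mem_of_syndetic hF (insert 0 F)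
  have hy : m * u ∈ S := by simpa using hS 0 (Finset.mem_insert_self _ _)
  have hme : m * e ≠ 0 := mul_ne_zero (hF0 m hm) he
  obtain ⟨q, hq, hqS⟩ := hF _ (mul_ne_zero hme (hS0 _ hy))
  refine ⟨q * (m * e), m * u, mul_ne_zero (hF0 q hq) hme, hS0 _ hy, ?_, ?_⟩
  · convert hS q (Finset.mem_insert_of_mem hq) using 1
    ring
  · convert hqS using 1
    ring

/-- Let `R` be an infinite countable integral domain and `S ⊆ R∖{0}`
multiplicatively syndetic (finitely many multiplicative shifts of `S` cover `R∖{0}`). Then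
`S` contains a pair `{x + y, x·y}` with `x, y` nonzero. -/
theorem stmt16 {R : Type*} [CommRing R] [IsDomain R] [Countable R] [Infinite R]
    (S : Set R) (hS0 : ∀ s ∈ S, s ≠ 0)
    (F : Finset R) (hF0 : ∀ n ∈ F, n ≠ 0)
    (hF : ∀ x : R, x ≠ 0 → ∃ n ∈ F, n * x ∈ S) :
    ∃ x y : R, x ≠ 0 ∧ y ≠ 0 ∧ x + y ∈ S ∧ x * y ∈ S :=
  stmt16_general S hS0 F hF0 hF
end

section
/- There exists a set E of positive integers such that: (i) E is additively thick, i.e. for every n ∈ ℕ there exists a ∈ ℕ with {a, a+1, …, a+n} ⊆ E; (ii) E is multiplicatively thick, i.e. for every finite set G of positive integers there exists a positive integer m with g·m ∈ E for all g ∈ G; and yet (iii) there is no pair of integers x, y with x > 2 and y > 2 such that both x + y ∈ E and x·y ∈ E. -/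
/-!
For `x, y ≥ 3` the sum `s = x + y` and the product `p = x * y` satisfy `3 * s - 9 ≤ p < s ^ 2`.
The set `E` is a union of levels; the `n`-th level is an interval `[a, a + n]` together with the
multiples `q, 2q, …, nq` of a prime `q > (a + n) ^ 2`, and every level lies above the square of
everything below it. Since `s < p < s ^ 2`, the numbers `s` and `p` must lie in one level, and
there each placement fails: the interval is too short to contain both; `p` cannot be a multiple
while `s` lies in the interval, as `p < s ^ 2 < q`; `s` cannot be a multiple while `p` lies in the
interval, as `p > s`; and if both are multiples, `q ∣ s` and `q ∣ p` force `q ∣ x` and `q ∣ y`,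
so `q ^ 2 ∣ p = g * q` with `0 < g < q`.
-/

lemma Nat.Prime.dvd_and_dvd_of_dvd_add_of_dvd_mul {q x y : ℕ} (hq : q.Prime)
    (hs : q ∣ x + y) (hp : q ∣ x * y) : q ∣ x ∧ q ∣ y := by
  have hxx : q ∣ x * x := by
    have h := Nat.dvd_sub (dvd_mul_of_dvd_right hs x) hp
    rwa [mul_add, Nat.add_sub_cancel] at h
  have hqx : q ∣ x := (hq.dvd_mul.mp hxx).elim id id
  exact ⟨hqx, (Nat.dvd_add_right hqx).mp hs⟩

namespace ThickSumProduct

lemma three_mul_add_le_mul_add_nine {x y : ℕ} (hx : 3 ≤ x) (hy : 3 ≤ y) :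
    3 * (x + y) ≤ x * y + 9 := by
  nlinarith [Nat.mul_le_mul (Nat.sub_le_sub_right hx 3) (Nat.sub_le_sub_right hy 3)]

lemma add_lt_mul_of_three_le {x y : ℕ} (hx : 3 ≤ x) (hy : 3 ≤ y) : x + y < x * y := by
  have := three_mul_add_le_mul_add_nine hx hy
  omega

lemma mul_lt_add_sq {x y : ℕ} (hx : 0 < x) (hy : 0 < y) : x * y < (x + y) ^ 2 := by
  nlinarith [Nat.mul_pos hx hy]

def block (a q N : ℕ) : Set ℕ := Set.Icc a (a + N) ∪ (· * q) '' Set.Icc 1 N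

lemma block_subset_Icc {a q N : ℕ} (hq : a + N < q) : block a q N ⊆ Set.Icc a ((N + 1) * q) := by
  rintro m (⟨ham, hma⟩ | ⟨g, ⟨hg1, hgN⟩, rfl⟩)
  · exact ⟨ham, by nlinarith⟩
  · exact ⟨by nlinarith, Nat.mul_le_mul_right q (by omega)⟩

lemma not_add_mem_block_and_mul_mem_block {a q N x y : ℕ} (ha : N + 9 < 2 * a)
    (hq : (a + N) ^ 2 < q) (hqp : q.Prime) (hx : 3 ≤ x) (hy : 3 ≤ y) :
    ¬(x + y ∈ block a q N ∧ x * y ∈ block a q N) := by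
  have hlin : a + N < q := lt_of_le_of_lt (Nat.le_self_pow two_ne_zero _) hq
  have hsp := three_mul_add_le_mul_add_nine hx hy
  have hps := mul_lt_add_sq (x := x) (y := y) (by omega) (by omega)
  rintro ⟨⟨hs₁, hs₂⟩ | ⟨g', ⟨hg'₁, -⟩, hs⟩, ⟨hp₁, hp₂⟩ | ⟨g, ⟨hg₁, hgN⟩, hp⟩⟩
  · omega
  · dsimp only at hp
    have : (x + y) ^ 2 ≤ (a + N) ^ 2 := Nat.pow_le_pow_left hs₂ 2
    have : q ≤ x * y := hp ▸ Nat.le_mul_of_pos_left q hg₁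
    omega
  · dsimp only at hs
    have : x + y ≤ x * y := (add_lt_mul_of_three_le hx hy).le
    have : q ≤ x + y := hs ▸ Nat.le_mul_of_pos_left q hg'₁
    omega
  · dsimp only at hs hp
    obtain ⟨hqx, hqy⟩ := hqp.dvd_and_dvd_of_dvd_add_of_dvd_mul ⟨g', by rw [← hs, mul_comm]⟩
      ⟨g, by rw [← hp, mul_comm]⟩
    have hqg : q ∣ g := by
      refine Nat.dvd_of_mul_dvd_mul_right hqp.pos ?_
      rw [hp]; exact mul_dvd_mul hqx hqy
    have := Nat.le_of_dvd hg₁ hqg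
    omega

lemma eq_of_mem_of_mem_of_lt_of_lt_sq {L : ℕ → Set ℕ} {b : ℕ → ℕ} (hb : Monotone b)
    (hL : ∀ n, L n ⊆ Set.Ioc (b n ^ 2) (b (n + 1))) {i j s p : ℕ} (hs : s ∈ L i) (hp : p ∈ L j)
    (hsp : s < p) (hps : p < s ^ 2) : i = j := by
  obtain ⟨hs₁, hs₂⟩ := hL i hs
  obtain ⟨hp₁, hp₂⟩ := hL j hp
  rcases lt_trichotomy i j with hij | rfl | hji
  · have : s ^ 2 ≤ b j ^ 2 := Nat.pow_le_pow_left (hs₂.trans (hb hij)) 2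
    omega
  · rfl
  · have : p ≤ b i ^ 2 := (hp₂.trans (hb hji)).trans (Nat.le_self_pow two_ne_zero _)
    omega

noncomputable def bound : ℕ → ℕ
  | 0 => 0
  | n + 1 => (n + 1) * Nat.nth Nat.Prime ((bound n ^ 2 + n + 5 + n) ^ 2)

-- The offset `n + 5` gives `n + 9 < 2 * start n`, so the interval of a level is too short to
-- contain both `x + y` and `x * y`.
noncomputable def start (n : ℕ) : ℕ := bound n ^ 2 + n + 5

noncomputable def levelPrime (n : ℕ) : ℕ := Nat.nth Nat.Prime ((start n + n) ^ 2)

noncomputable def level (n : ℕ) : Set ℕ := block (start n) (levelPrime n) n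

lemma bound_succ (n : ℕ) : bound (n + 1) = (n + 1) * levelPrime n := rfl

lemma sq_lt_levelPrime (n : ℕ) : (start n + n) ^ 2 < levelPrime n :=
  Nat.lt_of_lt_of_le (Nat.lt_add_of_pos_right two_pos) (Nat.add_two_le_nth_prime _)

lemma level_subset_Ioc (n : ℕ) : level n ⊆ Set.Ioc (bound n ^ 2) (bound (n + 1)) := by
  have hlin : start n + n < levelPrime n :=
    lt_of_le_of_lt (Nat.le_self_pow two_ne_zero _) (sq_lt_levelPrime n)
  intro m hm
  obtain ⟨h₁, h₂⟩ := block_subset_Icc hlin hm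
  rw [bound_succ]
  exact ⟨lt_of_lt_of_le (by unfold start; omega) h₁, h₂⟩

lemma start_mem_level (n : ℕ) : start n ∈ level n := Or.inl ⟨le_rfl, Nat.le_add_right _ _⟩

lemma bound_monotone : Monotone bound :=
  monotone_nat_of_le_succ fun n => by
    obtain ⟨h₁, h₂⟩ := level_subset_Ioc n (start_mem_level n)
    exact (Nat.le_self_pow two_ne_zero _).trans (h₁.le.trans h₂)

lemma not_add_mem_level_and_mul_mem_level {n x y : ℕ} (hx : 3 ≤ x) (hy : 3 ≤ y) :
    ¬(x + y ∈ level n ∧ x * y ∈ level n) :=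
  not_add_mem_block_and_mul_mem_block (by unfold start; omega) (sq_lt_levelPrime n)
    (Nat.prime_nth_prime _) hx hy

end ThickSumProduct

open ThickSumProduct in
/-- There is a set `E` of positive integers that is additively thick and
multiplicatively thick, yet contains no pair `{x + y, x·y}` with `x > 2` and `y > 2`. -/
theorem stmt17 :
    ∃ E : Set ℕ, (∀ n ∈ E, 0 < n) ∧
      (∀ n : ℕ, ∃ a : ℕ, 0 < a ∧ ∀ k ≤ n, a + k ∈ E) ∧
      (∀ G : Finset ℕ, (∀ g ∈ G, 0 < g) → ∃ m : ℕ, 0 < m ∧ ∀ g ∈ G, g * m ∈ E) ∧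
      ¬∃ x y : ℕ, 2 < x ∧ 2 < y ∧ x + y ∈ E ∧ x * y ∈ E := by
  refine ⟨⋃ n, level n, ?_, ?_, ?_, ?_⟩
  · simp only [Set.mem_iUnion]
    rintro m ⟨n, hm⟩
    exact Nat.zero_lt_of_lt (level_subset_Ioc n hm).1
  · exact fun n => ⟨start n, by unfold start; omega,
      fun k hk => Set.mem_iUnion.mpr ⟨n, Or.inl ⟨Nat.le_add_right _ _, by omega⟩⟩⟩
  · intro G hG
    refine ⟨levelPrime (G.sup id), (Nat.prime_nth_prime _).pos, fun g hg => ?_⟩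
    exact Set.mem_iUnion.mpr ⟨G.sup id, Or.inr ⟨g, ⟨hG g hg, Finset.le_sup (f := id) hg⟩, rfl⟩⟩
  · simp only [Set.mem_iUnion]
    rintro ⟨x, y, hx, hy, ⟨i, hs⟩, ⟨j, hp⟩⟩
    obtain rfl : i = j := eq_of_mem_of_mem_of_lt_of_lt_sq bound_monotone level_subset_Ioc hs hp
      (add_lt_mul_of_three_le hx hy) (mul_lt_add_sq (by omega) (by omega))
    exact not_add_mem_level_and_mul_mem_level hx hy ⟨hs, hp⟩
end

section
/- Let p be a nonprincipal ultrafilter on ℤ satisfying p·p = p. Then the set of positive integers {n ∈ ℤ : n > 0} belongs to p. -/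
open Filter

/-! If `p` missed the positive integers, nonprincipality would put the negative integers `N`
in `p`. Since `N ∈ p · p`, some `m < 0` has `{n | m * n < 0} ∈ p`; but that set is exactly the
set of positive integers. -/

theorem mem_umul_iff {R : Type*} [Mul R] {p q : Ultrafilter R} {E : Set R} :
    E ∈ umul p q ↔ {u | {v | u * v ∈ E} ∈ q} ∈ p :=
  Iff.rfl

theorem Ultrafilter.compl_singleton_mem {α : Type*} {p : Ultrafilter α}
    (hnp : ∀ a : α, p ≠ pure a) (a : α) : ({a}ᶜ : Set α) ∈ p := by
  refine Ultrafilter.compl_mem_iff_notMem.2 fun ha => ?_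
  obtain ⟨x, -, hpx⟩ := Ultrafilter.eq_pure_of_finite_mem (Set.finite_singleton a) ha
  exact hnp x hpx

theorem Ultrafilter.setOf_pos_mem_or_setOf_neg_mem {R : Type*} [Zero R] [LinearOrder R]
    {p : Ultrafilter R} (hnp : ∀ a : R, p ≠ pure a) :
    {x : R | 0 < x} ∈ p ∨ {x : R | x < 0} ∈ p := by
  have hunion : {x : R | 0 < x} ∪ {x | x < 0} = {0}ᶜ := by
    ext x
    simp [lt_or_lt_iff_ne, ne_comm]
  rw [← Ultrafilter.union_mem_iff, hunion]
  exact Ultrafilter.compl_singleton_mem hnp 0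

theorem setOf_pos_mem_of_umul_self_of_setOf_neg_mem {R : Type*} [Ring R] [LinearOrder R]
    [IsStrictOrderedRing R] {p : Ultrafilter R} (hid : umul p p = p)
    (hneg : {x : R | x < 0} ∈ p) : {x : R | 0 < x} ∈ p := by
  have hprod : {u : R | {v | u * v < 0} ∈ p} ∈ p := mem_umul_iff.1 (hid ▸ hneg)
  obtain ⟨m, hm, hm_neg⟩ := Ultrafilter.nonempty_of_mem (p.inter_mem hprod hneg)
  exact mem_of_superset hm fun n hn => pos_of_mul_neg_right hn (le_of_lt hm_neg)

/-- Every nonprincipal multiplicative idempotent ultrafilter on `ℤ` contains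
the set of positive integers. -/
theorem stmt19 (p : Ultrafilter ℤ) (hnp : ∀ u : ℤ, p ≠ pure u) (hid : umul p p = p) :
    {n : ℤ | 0 < n} ∈ p :=
  (Ultrafilter.setOf_pos_mem_or_setOf_neg_mem hnp).elim id
    (setOf_pos_mem_of_umul_self_of_setOf_neg_mem hid)
end
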